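/- arXiv:1109.3811 — 7 statements merged into one kernel-verified Lean document; each statement's English description precedes it below -/
import Mathlib

section
/- Every unbounded isometry of a Urysohn space U moves maximally: for every finite nonempty X ⊆ U and every finite tuple ā = (a_1, …, a_n) of points of U there is a tuple ā' = (a'_1, …, a'_n) in U with d(a'_i, a'_j) = d(a_i, a_j) and d(a'_i, x) = d(a_i, x) for all i, j and all x ∈ X, such that ā' is independent from g(ā') over X; g(X), i.e. ā' ⫫_X g(X) ∪ g(ā') and ā' ∪ X ⫫_{g(X)} g(ā'). -/
open Metric Set

namespace TentZieglerU

/-- A metric space is finitely injective if every Katětov function on a finite subset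
is realised as the distance function from some point. -/
def FinitelyInjective (U : Type*) [MetricSpace U] : Prop :=
  ∀ X : Set U, X.Finite → ∀ f : U → ℝ,
    (∀ x ∈ X, ∀ x' ∈ X, |f x - f x'| ≤ dist x x' ∧ dist x x' ≤ f x + f x') →
    ∃ y : U, ∀ x ∈ X, dist y x = f x

/-- An isometry `g` of `U` is unbounded if `sup_x d(x, g x) = ∞`. -/
def IsUnbounded {U : Type*} [MetricSpace U] (g : U ≃ᵢ U) : Prop :=
  ∀ N : ℝ, ∃ x : U, N < dist x (g x)

/-- The independence relation of the Urysohn space: `A ⫫_B C` iff every pair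
`a ∈ A`, `c ∈ C` has a geodesic through some `b ∈ B`. -/
def MIndep {U : Type*} [MetricSpace U] (A B C : Set U) : Prop :=
  ∀ a ∈ A, ∀ c ∈ C, ∃ b ∈ B, dist a c = dist a b + dist b c


/-!
Write `freeDist u v = min_{x, y ∈ X} d(u, x) + d(x, g y) + d(y, v)`. We build, one point at a
time, a map `φ` fixing `X`, isometric on `D = X ∪ ā`, with `d(φ u, g (φ v)) = freeDist u v` for
`u, v ∈ D`; both independences are read off from the minimising `x, y`. To add a point `b`, the
distances `ρ z = min_{u ∈ D} d(b, u) + d(φ u, z)` to `φ D ∪ g φ D ∪ g⁻¹ φ D` are what finite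
injectivity provides, except that `d(q, g q) = freeDist b b` refers to the new point itself.
Unboundedness of `g` gives a point `w` with `d(w, z) = S + ρ z` on these points and `d(w, g w)`
large. A point `q` with `d(q, φ u) = d(b, u)`, `d(q, w) = S` and `d(q, g⁻¹ w) = S + freeDist b b`
then lies on geodesics from `w`, which pins `d(q, z) = ρ z`, and
`d(q, g q) ≥ d(g q, w) - d(q, w) = freeDist b b`.
-/

section

variable {U : Type*} [MetricSpace U]

theorem MIndep.mono {A A' B C C' : Set U} (h : MIndep A B C) (hA : A' ⊆ A) (hC : C' ⊆ C) :
    MIndep A' B C' :=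
  fun a ha c hc => h a (hA ha) c (hC hc)

theorem _root_.IsometryEquiv.dist_symm_apply {α β : Type*} [PseudoMetricSpace α]
    [PseudoMetricSpace β] (h : α ≃ᵢ β) (x : β) (y : α) : dist (h.symm x) y = dist x (h y) := by
  rw [← h.dist_eq, h.apply_symm_apply]

theorem FinitelyInjective.exists_dist_eq (hU : FinitelyInjective U) {ι : Type*} [Finite ι]
    (p : ι → U) (r : ι → ℝ)
    (h : ∀ i j, r i ≤ r j + dist (p i) (p j) ∧ dist (p i) (p j) ≤ r i + r j) :
    ∃ y, ∀ i, dist y (p i) = r i := by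
  classical
  let f : U → ℝ := fun z => if hz : ∃ i, p i = z then r hz.choose else 0
  have hf : ∀ i, f (p i) = r i := by
    intro i
    have hj : ∃ j, p j = p i := ⟨i, rfl⟩
    have h₁ := (h hj.choose i).1
    have h₂ := (h i hj.choose).1
    rw [hj.choose_spec, dist_self] at h₁ h₂
    simp only [f, dif_pos hj]
    linarith
  obtain ⟨y, hy⟩ := hU (range p) (finite_range p) f <| by
    rintro _ ⟨i, rfl⟩ _ ⟨j, rfl⟩
    rw [hf, hf, abs_sub_le_iff]
    exact ⟨⟨by linarith [h i j], by linarith [h j i, dist_comm (p i) (p j)]⟩, (h i j).2⟩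
  exact ⟨y, fun i => (hy _ (mem_range_self i)).trans (hf i)⟩

theorem exists_far_point (hU : FinitelyInjective U) {g : U ≃ᵢ U} (hg : IsUnbounded g)
    {T : Finset U} (hT : T.Nonempty) {ρ : U → ℝ} (hρ₀ : ∀ z ∈ T, 0 ≤ ρ z)
    (hρ : ∀ z ∈ T, ∀ z' ∈ T, ρ z ≤ ρ z' + dist z z') (Λ : ℝ) :
    ∃ w S, Λ ≤ S ∧ (∀ z ∈ T, dist w z = S + ρ z) ∧ Λ ≤ dist w (g w) := by
  obtain ⟨z₀, hz₀⟩ := hT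
  set δ := diam (T : Set U)
  have hδ : ∀ z ∈ T, ∀ z' ∈ T, dist z z' ≤ δ := fun z hz z' hz' =>
    dist_le_diam_of_mem T.finite_toSet.isBounded hz hz'
  have hδ₀ : 0 ≤ δ := diam_nonneg
  obtain ⟨u, hu⟩ := hg (2 * (|Λ| + 4 * δ + ρ z₀) + dist z₀ (g z₀))
  have hu₀ : |Λ| + 4 * δ + ρ z₀ ≤ dist u z₀ := by
    have := dist_triangle4 u z₀ (g z₀) (g u)
    rw [g.dist_eq] at this
    linarith [dist_comm z₀ u, dist_comm z₀ (g z₀)]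
  obtain ⟨z₁, hz₁, hmin⟩ := T.exists_min_image (fun z => dist u z - ρ z) ⟨z₀, hz₀⟩
  set S := dist u z₁ - ρ z₁ with hS_def
  have hS : |Λ| + 2 * δ ≤ S := by
    linarith [dist_triangle u z₁ z₀, hρ z₁ hz₁ z₀ hz₀, hδ z₁ hz₁ z₀ hz₀]
  have hspread : ∀ z ∈ T, dist u z ≤ 2 * δ + S + ρ z := fun z hz => by
    linarith [dist_triangle u z₁ z, hρ z₁ hz₁ z hz, hδ z₁ hz₁ z hz]
  -- the values `d(u, z) - ρ z` spread over at most `2δ`, so `w` fits at distance `2δ` from `u`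
  obtain ⟨w, hw⟩ := hU.exists_dist_eq (ι := Option T) (fun i => i.elim u Subtype.val)
    (fun i => i.elim (2 * δ) (fun z => S + ρ z))
    (by
      rintro (_ | ⟨z, hz⟩) (_ | ⟨z', hz'⟩) <;> simp only [Option.elim, dist_self] <;> constructor
      · linarith
      · linarith
      · linarith [hρ₀ z' hz', abs_nonneg Λ, dist_nonneg (x := u) (y := z')]
      · linarith [hspread z' hz']
      · linarith [hmin z hz, dist_comm z u]
      · linarith [hspread z hz, dist_comm z u]
      · linarith [hρ z hz z' hz']
      · linarith [hδ z hz z' hz', hρ₀ z hz, hρ₀ z' hz', abs_nonneg Λ])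
  refine ⟨w, S, by linarith [le_abs_self Λ], fun z hz => hw (some ⟨z, hz⟩), ?_⟩
  have hwu : dist w u = 2 * δ := hw none
  have := dist_triangle4 u w (g w) (g u)
  rw [g.dist_eq, dist_comm u w, hwu] at this
  linarith [le_abs_self Λ, abs_nonneg Λ, hρ₀ z₀ hz₀, dist_nonneg (x := z₀) (y := g z₀)]

section FreeDist

variable (g : U ≃ᵢ U) (X : Finset U) (hX : X.Nonempty)

/-- The length of a shortest path `u → x → g y → g v` with `x, y ∈ X`: the distance from `u` to
`g v` when both are placed freely over `X ∪ g X`. -/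
noncomputable def freeDist (u v : U) : ℝ :=
  (X ×ˢ X).inf' (hX.product hX) fun xy => dist u xy.1 + dist xy.1 (g xy.2) + dist xy.2 v

variable {g X hX}

theorem freeDist_le {x y : U} (hx : x ∈ X) (hy : y ∈ X) (u v : U) :
    freeDist g X hX u v ≤ dist u x + dist x (g y) + dist y v :=
  Finset.inf'_le _ (Finset.mk_mem_product hx hy)

variable (g hX) in
theorem exists_freeDist_eq (u v : U) :
    ∃ x ∈ X, ∃ y ∈ X, freeDist g X hX u v = dist u x + dist x (g y) + dist y v := by
  obtain ⟨⟨x, y⟩, hxy, h⟩ := Finset.exists_mem_eq_inf' (hX.product hX)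
    fun xy => dist u xy.1 + dist xy.1 (g xy.2) + dist xy.2 v
  exact ⟨x, (Finset.mem_product.1 hxy).1, y, (Finset.mem_product.1 hxy).2, h⟩

theorem dist_le_freeDist (u v : U) : dist u (g v) ≤ freeDist g X hX u v := by
  obtain ⟨x, -, y, -, h⟩ := exists_freeDist_eq g hX u v
  rw [h, ← g.dist_eq y v]
  exact dist_triangle4 _ _ _ _

theorem freeDist_le_dist_add (u u' v : U) :
    freeDist g X hX u v ≤ dist u u' + freeDist g X hX u' v := by
  obtain ⟨x, hx, y, hy, h⟩ := exists_freeDist_eq g hX u' v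
  linarith [freeDist_le hx hy u v (g := g) (hX := hX), dist_triangle u u' x]

theorem freeDist_le_add_dist (u v v' : U) :
    freeDist g X hX u v ≤ freeDist g X hX u v' + dist v' v := by
  obtain ⟨x, hx, y, hy, h⟩ := exists_freeDist_eq g hX u v'
  linarith [freeDist_le hx hy u v (g := g) (hX := hX), dist_triangle y v' v]

theorem freeDist_eq_dist_of_mem {x y : U} (hx : x ∈ X) (hy : y ∈ X) :
    freeDist g X hX x y = dist x (g y) :=
  le_antisymm (by simpa using freeDist_le hx hy x y (g := g) (hX := hX)) (dist_le_freeDist x y)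

theorem dist_apply_self_le {b q : U} {S : ℝ} (hq : ∀ x ∈ X, dist q x = S + dist b x) :
    dist q (g q) ≤ 2 * S + freeDist g X hX b b := by
  obtain ⟨x, hx, y, hy, h⟩ := exists_freeDist_eq g hX b b
  have := dist_triangle4 q x (g y) (g q)
  rw [g.dist_eq, dist_comm y, hq x hx, hq y hy] at this
  linarith [dist_comm b y]

end FreeDist

section FreeCopy

variable {g : U ≃ᵢ U} {X : Finset U} {hX : X.Nonempty}

variable (g X hX) in
structure IsFreeCopy (D : Finset U) (φ : U → U) : Prop where
  apply_eq : ∀ x ∈ X, φ x = x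
  dist_eq : ∀ u ∈ D, ∀ v ∈ D, dist (φ u) (φ v) = dist u v
  dist_apply_eq : ∀ u ∈ D, ∀ v ∈ D, dist (φ u) (g (φ v)) = freeDist g X hX u v

variable {D : Finset U} {φ : U → U}

theorem isFreeCopy_id : IsFreeCopy g X hX X id :=
  ⟨fun _ _ => rfl, fun _ _ _ _ => rfl, fun _ hu _ hv => (freeDist_eq_dist_of_mem hu hv).symm⟩

namespace IsFreeCopy

variable (h : IsFreeCopy g X hX D φ) (hXD : X ⊆ D)
include h hXD

theorem dist_apply_eq_of_mem {u x : U} (hu : u ∈ D) (hx : x ∈ X) : dist (φ u) x = dist u x := by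
  simpa only [h.apply_eq x hx] using h.dist_eq u hu x (hXD hx)

theorem mIndep_image : MIndep (φ '' D) X (g '' (φ '' D)) := by
  rintro _ ⟨u, hu, rfl⟩ _ ⟨_, ⟨v, hv, rfl⟩, rfl⟩
  obtain ⟨x, hx, y, hy, hxy⟩ := exists_freeDist_eq g hX u v
  refine ⟨x, hx, le_antisymm (dist_triangle _ _ _) ?_⟩
  have hyv : dist (g y) (g (φ v)) = dist y v := by
    rw [g.dist_eq, ← h.dist_eq y (hXD hy) v hv, h.apply_eq y hy]
  calc dist (φ u) x + dist x (g (φ v))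
      ≤ dist (φ u) x + (dist x (g y) + dist (g y) (g (φ v))) := by gcongr; exact dist_triangle _ _ _
    _ = dist (φ u) (g (φ v)) := by
      rw [h.dist_apply_eq u hu v hv, hxy, hyv, h.dist_apply_eq_of_mem hXD hu hx]; ring

theorem mIndep_image_apply : MIndep (φ '' D) (g '' X) (g '' (φ '' D)) := by
  rintro _ ⟨u, hu, rfl⟩ _ ⟨_, ⟨v, hv, rfl⟩, rfl⟩
  obtain ⟨x, hx, y, hy, hxy⟩ := exists_freeDist_eq g hX u v
  refine ⟨g y, mem_image_of_mem g hy, le_antisymm (dist_triangle _ _ _) ?_⟩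
  have huy : dist (φ u) (g y) = freeDist g X hX u y := by
    rw [← h.dist_apply_eq u hu y (hXD hy), h.apply_eq y hy]
  calc dist (φ u) (g y) + dist (g y) (g (φ v))
      ≤ dist u x + dist x (g y) + dist y y + dist y v := by
        rw [huy, g.dist_eq, ← h.dist_eq y (hXD hy) v hv, h.apply_eq y hy]
        gcongr
        exact freeDist_le hx hy u y
    _ = dist (φ u) (g (φ v)) := by rw [h.dist_apply_eq u hu v hv, hxy, dist_self, add_zero]

end IsFreeCopy

end FreeCopy

section FreeExtension

variable (φ : U → U) (D : Finset U) (hD : D.Nonempty)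

/-- The Katětov extension of `φ u ↦ d(b, u)`: the distances of a point placed over `φ '' D` as
`b` lies over `D`, and otherwise as far away as possible. -/
noncomputable def freeExtDist (b z : U) : ℝ :=
  D.inf' hD fun u => dist b u + dist (φ u) z

variable {φ D hD} {b : U}

theorem freeExtDist_le {u : U} (hu : u ∈ D) (z : U) :
    freeExtDist φ D hD b z ≤ dist b u + dist (φ u) z :=
  Finset.inf'_le _ hu

variable (φ hD b) in
theorem exists_freeExtDist_eq (z : U) :
    ∃ u ∈ D, freeExtDist φ D hD b z = dist b u + dist (φ u) z :=
  Finset.exists_mem_eq_inf' hD _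

theorem freeExtDist_nonneg (z : U) : 0 ≤ freeExtDist φ D hD b z := by
  obtain ⟨u, -, h⟩ := exists_freeExtDist_eq φ hD b z
  rw [h]; positivity

theorem freeExtDist_le_add_dist (z z' : U) :
    freeExtDist φ D hD b z ≤ freeExtDist φ D hD b z' + dist z z' := by
  obtain ⟨u, hu, h⟩ := exists_freeExtDist_eq φ hD b z'
  linarith [freeExtDist_le hu z (hD := hD) (φ := φ) (b := b), dist_triangle (φ u) z' z,
    dist_comm z z']

theorem dist_eq_freeExtDist {q w z : U} {S : ℝ} (hq : ∀ u ∈ D, dist q (φ u) = dist b u)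
    (hw : dist w z = S + freeExtDist φ D hD b z) (hqw : dist q w = S) :
    dist q z = freeExtDist φ D hD b z := by
  obtain ⟨u, hu, h⟩ := exists_freeExtDist_eq φ hD b z
  refine le_antisymm ?_ ?_
  · rw [h, ← hq u hu]; exact dist_triangle _ _ _
  · linarith [dist_triangle w q z, dist_comm q w]

variable {g : U ≃ᵢ U} {X : Finset U} {hX : X.Nonempty}

namespace IsFreeCopy

variable (h : IsFreeCopy g X hX D φ)
include h

theorem freeExtDist_apply {v : U} (hv : v ∈ D) : freeExtDist φ D hD b (φ v) = dist b v := by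
  refine le_antisymm (by simpa using freeExtDist_le hv (φ v) (φ := φ) (hD := hD) (b := b)) ?_
  obtain ⟨u, hu, hbu⟩ := exists_freeExtDist_eq φ hD b (φ v)
  rw [hbu, h.dist_eq u hu v hv]
  exact dist_triangle _ _ _

variable (hXD : X ⊆ D)
include hXD

theorem freeExtDist_apply_apply {v : U} (hv : v ∈ D) :
    freeExtDist φ D hD b (g (φ v)) = freeDist g X hX b v := by
  refine le_antisymm ?_ ?_
  · obtain ⟨x, hx, y, hy, hxy⟩ := exists_freeDist_eq g hX b v
    calc freeExtDist φ D hD b (g (φ v)) ≤ dist b x + freeDist g X hX x v := by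
          rw [← h.dist_apply_eq x (hXD hx) v hv]; exact freeExtDist_le (hXD hx) _
      _ ≤ dist b x + (dist x x + dist x (g y) + dist y v) := by gcongr; exact freeDist_le hx hy x v
      _ = freeDist g X hX b v := by rw [hxy, dist_self]; ring
  · obtain ⟨u, hu, hbu⟩ := exists_freeExtDist_eq φ hD b (g (φ v))
    rw [hbu, h.dist_apply_eq u hu v hv]
    exact freeDist_le_dist_add b u v

theorem freeExtDist_symm_apply {v : U} (hv : v ∈ D) :
    freeExtDist φ D hD b (g.symm (φ v)) = freeDist g X hX v b := by
  have hsymm : ∀ u ∈ D, dist (φ u) (g.symm (φ v)) = freeDist g X hX v u := fun u hu => by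
    rw [dist_comm, g.dist_symm_apply, h.dist_apply_eq v hv u hu]
  refine le_antisymm ?_ ?_
  · obtain ⟨x, hx, y, hy, hxy⟩ := exists_freeDist_eq g hX v b
    calc freeExtDist φ D hD b (g.symm (φ v)) ≤ dist b y + freeDist g X hX v y := by
          rw [← hsymm y (hXD hy)]; exact freeExtDist_le (hXD hy) _
      _ ≤ dist b y + (dist v x + dist x (g y) + dist y y) := by gcongr; exact freeDist_le hx hy v y
      _ = freeDist g X hX v b := by rw [hxy, dist_self, dist_comm b y]; ring
  · obtain ⟨u, hu, hbu⟩ := exists_freeExtDist_eq φ hD b (g.symm (φ v))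
    rw [hbu, hsymm u hu, dist_comm b u, add_comm]
    exact freeDist_le_add_dist v b u

end IsFreeCopy

end FreeExtension

section Construction

variable {g : U ≃ᵢ U} {X : Finset U} {hX : X.Nonempty} {D : Finset U} {φ : U → U}

theorem IsFreeCopy.exists_dist_eq_of_far (hU : FinitelyInjective U)
    (h : IsFreeCopy g X hX D φ) (hXD : X ⊆ D) {b w : U} {S : ℝ}
    (hS : ∀ u ∈ D, dist b u ≤ S) (hwφ : ∀ u ∈ D, dist w (φ u) = S + dist b u)
    (hw'φ : ∀ u ∈ D, dist (g.symm w) (φ u) = S + freeDist g X hX b u)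
    (hww : freeDist g X hX b b ≤ dist w (g w)) :
    ∃ q, (∀ u ∈ D, dist q (φ u) = dist b u) ∧ dist q w = S ∧
      dist q (g.symm w) = S + freeDist g X hX b b := by
  set μ := freeDist g X hX b b
  have hS₀ : 0 ≤ S := dist_nonneg.trans (hS _ (hX.mono hXD).choose_spec)
  have hμ : 0 ≤ μ := dist_nonneg.trans (dist_le_freeDist b b)
  have hww' : dist w (g.symm w) ≤ 2 * S + μ := by
    rw [dist_comm, g.dist_symm_apply]
    refine dist_apply_self_le fun x hx => ?_
    simpa only [h.apply_eq x hx] using hwφ x (hXD hx)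
  have hww'' : dist (g.symm w) w = dist w (g w) := g.dist_symm_apply w w
  obtain ⟨q, hq⟩ := hU.exists_dist_eq (ι := D ⊕ Bool)
    (Sum.elim (fun u => φ u) fun t => bif t then w else g.symm w)
    (Sum.elim (fun u => dist b u) fun t => bif t then S else S + μ) <| by
      rintro (⟨u, hu⟩ | _ | _) (⟨v, hv⟩ | _ | _) <;>
        simp only [Sum.elim_inl, Sum.elim_inr, cond, dist_self] <;> constructor
      · linarith [h.dist_eq u hu v hv, dist_triangle b v u, dist_comm v u]
      · linarith [h.dist_eq u hu v hv, dist_triangle_left u v b]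
      · linarith [hS u hu, dist_nonneg (x := φ u) (y := g.symm w)]
      · linarith [hw'φ u hu, dist_comm (φ u) (g.symm w),
          freeDist_le_add_dist b u b (g := g) (hX := hX)]
      · linarith [hwφ u hu, dist_comm (φ u) w]
      · linarith [hwφ u hu, dist_comm (φ u) w]
      · linarith [hw'φ v hv, freeDist_le_add_dist b b v (g := g) (hX := hX), dist_comm v b]
      · linarith [hw'φ v hv, freeDist_le_add_dist b v b (g := g) (hX := hX)]
      · linarith
      · linarith [dist_nonneg (x := b) (y := b)]
      · linarith
      · linarith [dist_comm (g.symm w) w]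
      · linarith [hwφ v hv, dist_nonneg (x := b) (y := v)]
      · linarith [hwφ v hv]
      · linarith [dist_nonneg (x := w) (y := g.symm w)]
      · linarith
      · linarith
      · linarith [dist_nonneg (x := b) (y := b)]
  exact ⟨q, fun u hu => hq (.inl ⟨u, hu⟩), hq (.inr true), hq (.inr false)⟩

theorem IsFreeCopy.exists_extension (hU : FinitelyInjective U) (hg : IsUnbounded g)
    (h : IsFreeCopy g X hX D φ) (hXD : X ⊆ D) (b : U) :
    ∃ q, (∀ u ∈ D, dist q (φ u) = dist b u) ∧
      (∀ u ∈ D, dist q (g (φ u)) = freeDist g X hX b u) ∧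
      (∀ u ∈ D, dist q (g.symm (φ u)) = freeDist g X hX u b) ∧
      dist q (g q) = freeDist g X hX b b := by
  classical
  have hD : D.Nonempty := hX.mono hXD
  set T := D.image φ ∪ D.image (g ∘ φ) ∪ D.image (g.symm ∘ φ)
  have hT : ∀ u ∈ D, φ u ∈ T ∧ g (φ u) ∈ T ∧ g.symm (φ u) ∈ T := fun u hu =>
    ⟨Finset.mem_union_left _ (Finset.mem_union_left _ (Finset.mem_image_of_mem φ hu)),
      Finset.mem_union_left _ (Finset.mem_union_right _ (Finset.mem_image_of_mem (g ∘ φ) hu)),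
      Finset.mem_union_right _ (Finset.mem_image_of_mem (g.symm ∘ φ) hu)⟩
  obtain ⟨w, S, hS, hwT, hww⟩ := exists_far_point hU hg ⟨_, (hT _ hD.choose_spec).1⟩
    (fun z _ => freeExtDist_nonneg z) (fun z _ z' _ => freeExtDist_le_add_dist z z')
    (freeDist g X hX b b + D.sup' hD (dist b)) (ρ := freeExtDist φ D hD b)
  have hR : ∀ u ∈ D, dist b u ≤ S := fun u hu => by
    linarith [Finset.le_sup' (dist b) hu, dist_le_freeDist b b (g := g) (hX := hX),
      dist_nonneg (x := b) (y := g b)]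
  obtain ⟨q, hqφ, hqw, hqw'⟩ := h.exists_dist_eq_of_far hU hXD hR
    (fun u hu => by rw [hwT _ (hT u hu).1, h.freeExtDist_apply hu])
    (fun u hu => by
      rw [g.dist_symm_apply, hwT _ (hT u hu).2.1, h.freeExtDist_apply_apply hXD hu])
    (by linarith [Finset.le_sup' (dist b) hD.choose_spec, dist_nonneg (x := b) (y := hD.choose)])
  have hqT : ∀ z ∈ T, dist q z = freeExtDist φ D hD b z := fun z hz =>
    dist_eq_freeExtDist hqφ (hwT z hz) hqw
  refine ⟨q, hqφ, fun u hu => ?_, fun u hu => ?_, le_antisymm ?_ ?_⟩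
  · rw [hqT _ (hT u hu).2.1, h.freeExtDist_apply_apply hXD hu]
  · rw [hqT _ (hT u hu).2.2, h.freeExtDist_symm_apply hXD hu]
  · have := dist_apply_self_le (g := g) (hX := hX) (b := b) (S := 0) fun x hx => by
      rw [zero_add, ← h.apply_eq x hx, hqφ x (hXD hx), h.apply_eq x hx]
    linarith
  · have := dist_triangle (g q) q w
    rw [dist_comm (g q) w, ← g.dist_symm_apply, dist_comm (g.symm w), hqw', hqw, dist_comm] at this
    linarith

theorem IsFreeCopy.update [DecidableEq U] (h : IsFreeCopy g X hX D φ) (hXD : X ⊆ D) {b q : U}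
    (hb : b ∉ D) (hq₁ : ∀ u ∈ D, dist q (φ u) = dist b u)
    (hq₂ : ∀ u ∈ D, dist q (g (φ u)) = freeDist g X hX b u)
    (hq₃ : ∀ u ∈ D, dist q (g.symm (φ u)) = freeDist g X hX u b)
    (hq₄ : dist q (g q) = freeDist g X hX b b) :
    IsFreeCopy g X hX (insert b D) (Function.update φ b q) := by
  have hφ : ∀ u ∈ D, Function.update φ b q u = φ u := fun u hu =>
    Function.update_of_ne (ne_of_mem_of_not_mem hu hb) _ _
  refine ⟨fun x hx => (hφ x (hXD hx)).trans (h.apply_eq x hx), ?_, ?_⟩ <;>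
    simp +contextual only [Finset.forall_mem_insert, Function.update_self, hφ]
  · refine ⟨⟨dist_self _ |>.trans (dist_self _).symm, hq₁⟩, fun u hu => ⟨?_, h.dist_eq u hu⟩⟩
    rw [dist_comm, hq₁ u hu, dist_comm]
  · refine ⟨⟨hq₄, hq₂⟩, fun u hu => ⟨?_, h.dist_apply_eq u hu⟩⟩
    rw [← g.dist_symm_apply, dist_comm, hq₃ u hu]

theorem exists_isFreeCopy [DecidableEq U] (hU : FinitelyInjective U) (hg : IsUnbounded g)
    (B : Finset U) : ∃ φ, IsFreeCopy g X hX (X ∪ B) φ := by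
  induction B using Finset.induction_on with
  | empty => exact ⟨id, by simpa using isFreeCopy_id⟩
  | insert b B _ ih =>
    obtain ⟨φ, hφ⟩ := ih
    rw [Finset.union_insert]
    by_cases hb : b ∈ X ∪ B
    · exact ⟨φ, by rwa [Finset.insert_eq_of_mem hb]⟩
    · obtain ⟨q, hq₁, hq₂, hq₃, hq₄⟩ := hφ.exists_extension hU hg Finset.subset_union_left b
      exact ⟨_, hφ.update Finset.subset_union_left hb hq₁ hq₂ hq₃ hq₄⟩

end Construction

end

theorem unbounded_moves_maximally_general {U : Type*} [MetricSpace U] (hU : FinitelyInjective U)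
    (g : U ≃ᵢ U) (hg : IsUnbounded g) :
    ∀ X : Set U, X.Finite → X.Nonempty → ∀ {n : ℕ} (a : Fin n → U),
      ∃ a' : Fin n → U,
        (∀ i j, dist (a' i) (a' j) = dist (a i) (a j)) ∧
        (∀ i, ∀ x ∈ X, dist (a' i) x = dist (a i) x) ∧
        MIndep (Set.range a') X ((g '' X) ∪ Set.range fun i => g (a' i)) ∧
        MIndep (Set.range a' ∪ X) (g '' X) (Set.range fun i => g (a' i)) := by
  classical
  intro X hfin hne n a
  obtain ⟨X, rfl⟩ := hfin.exists_finset_coe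
  have hX : X.Nonempty := Finset.coe_nonempty.1 hne
  obtain ⟨φ, hφ⟩ := exists_isFreeCopy (hX := hX) hU hg (Finset.univ.image a)
  set D := X ∪ Finset.univ.image a
  have hXD : X ⊆ D := Finset.subset_union_left
  have ha : ∀ i, a i ∈ D := fun i =>
    Finset.mem_union_right _ (Finset.mem_image_of_mem a (Finset.mem_univ i))
  have hrange : range (φ ∘ a) ⊆ φ '' D := range_subset_iff.2 fun i => mem_image_of_mem φ (ha i)
  have hXφ : (X : Set U) ⊆ φ '' D := fun x hx => ⟨x, hXD hx, hφ.apply_eq x hx⟩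
  have hgrange : (range fun i => g ((φ ∘ a) i)) ⊆ g '' (φ '' D) :=
    range_subset_iff.2 fun i => mem_image_of_mem g (hrange (mem_range_self i))
  exact ⟨φ ∘ a, fun i j => hφ.dist_eq _ (ha i) _ (ha j),
    fun i x hx => hφ.dist_apply_eq_of_mem hXD (ha i) hx,
    (hφ.mIndep_image hXD).mono hrange (union_subset (image_mono hXφ) hgrange),
    (hφ.mIndep_image_apply hXD).mono (union_subset hrange hXφ) hgrange⟩

/-- Proposition 4.1: every unbounded isometry of the Urysohn space moves maximally. -/
theorem unbounded_moves_maximally {U : Type*} [MetricSpace U] [Nonempty U] [CompleteSpace U]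
    [TopologicalSpace.SeparableSpace U] (hU : FinitelyInjective U)
    (g : U ≃ᵢ U) (hg : IsUnbounded g) :
    ∀ X : Set U, X.Finite → X.Nonempty → ∀ {n : ℕ} (a : Fin n → U),
      ∃ a' : Fin n → U,
        (∀ i j, dist (a' i) (a' j) = dist (a i) (a j)) ∧
        (∀ i, ∀ x ∈ X, dist (a' i) x = dist (a i) x) ∧
        MIndep (Set.range a') X ((g '' X) ∪ Set.range fun i => g (a' i)) ∧
        MIndep (Set.range a' ∪ X) (g '' X) (Set.range fun i => g (a' i)) :=
  unbounded_moves_maximally_general hU g hg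

end TentZieglerU
end

section
/- The automorphism group of a countable first-order structure M with a stationary independence relation, equipped with the topology of pointwise convergence, has a dense conjugacy class. The same conclusion holds when M carries only a local stationary independence relation, provided that for all finite tuples ā and b̄ in M realising the same type there is an element c ∈ M with tp(ā/{c}) = tp(b̄/{c}). -/
open FirstOrder Set

namespace TentZiegler

variable {L : FirstOrder.Language} {M : Type*} [L.Structure M]

/-- The automorphism group of a first-order structure, with `(f * g) x = f (g x)`. -/
instance autGroup : Group (M ≃[L] M) where
  mul f g := f.comp g
  one := FirstOrder.Language.Equiv.refl L M
  inv := FirstOrder.Language.Equiv.symm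
  mul_assoc _ _ _ := rfl
  one_mul _ := rfl
  mul_one _ := rfl
  inv_mul_cancel f := FirstOrder.Language.Equiv.ext fun x =>
    (f.symm_apply_apply x).trans (FirstOrder.Language.Equiv.refl_apply x).symm

@[simp] lemma aut_mul_apply (f g : M ≃[L] M) (x : M) : (f * g) x = f (g x) := rfl

@[simp] lemma aut_inv_apply (f : M ≃[L] M) (x : M) : f⁻¹ x = f.symm x := rfl

/-- Tuples `x` and `y` realise the same type over `B`: some automorphism fixing `B`
pointwise maps `x` to `y`. -/
def SameTypeOver (L : FirstOrder.Language) {M : Type*} [L.Structure M]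
    (B : Set M) {n : ℕ} (x y : Fin n → M) : Prop :=
  ∃ g : M ≃[L] M, (∀ b ∈ B, g b = b) ∧ ∀ i, g (x i) = y i

/-- `indep` is a stationary independence relation on `M` (between finite subsets). -/
structure IsSIR (L : FirstOrder.Language) (M : Type*) [L.Structure M]
    (indep : Set M → Set M → Set M → Prop) : Prop where
  invariance : ∀ (g : M ≃[L] M) {A B C : Set M}, A.Finite → B.Finite → C.Finite →
    indep A B C → indep (g '' A) (g '' B) (g '' C)
  monotonicity₁ : ∀ {A B C D : Set M}, A.Finite → B.Finite → C.Finite → D.Finite →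
    indep A B (C ∪ D) → indep A B C
  monotonicity₂ : ∀ {A B C D : Set M}, A.Finite → B.Finite → C.Finite → D.Finite →
    indep A B (C ∪ D) → indep A (B ∪ C) D
  transitivity : ∀ {A B C D : Set M}, A.Finite → B.Finite → C.Finite → D.Finite →
    indep A B C → indep A (B ∪ C) D → indep A B D
  symmetry : ∀ {A B C : Set M}, A.Finite → B.Finite → C.Finite →
    indep A B C → indep C B A
  existence : ∀ {n : ℕ} (a : Fin n → M) {B C : Set M}, B.Finite → C.Finite →
    ∃ a' : Fin n → M, SameTypeOver L B a a' ∧ indep (Set.range a') B C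
  stationarity : ∀ {n : ℕ} {a a' : Fin n → M} {B C : Set M}, B.Finite → C.Finite →
    SameTypeOver L B a a' → indep (Set.range a) B C → indep (Set.range a') B C →
    SameTypeOver L (B ∪ C) a a'

/-- `indep` is a local stationary independence relation on `M`: the axioms are only
required over nonempty base sets. -/
structure IsLocalSIR (L : FirstOrder.Language) (M : Type*) [L.Structure M]
    (indep : Set M → Set M → Set M → Prop) : Prop where
  invariance : ∀ (g : M ≃[L] M) {A B C : Set M}, A.Finite → B.Finite → C.Finite →
    B.Nonempty → indep A B C → indep (g '' A) (g '' B) (g '' C)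
  monotonicity₁ : ∀ {A B C D : Set M}, A.Finite → B.Finite → C.Finite → D.Finite →
    B.Nonempty → indep A B (C ∪ D) → indep A B C
  monotonicity₂ : ∀ {A B C D : Set M}, A.Finite → B.Finite → C.Finite → D.Finite →
    B.Nonempty → indep A B (C ∪ D) → indep A (B ∪ C) D
  transitivity : ∀ {A B C D : Set M}, A.Finite → B.Finite → C.Finite → D.Finite →
    B.Nonempty → indep A B C → indep A (B ∪ C) D → indep A B D
  symmetry : ∀ {A B C : Set M}, A.Finite → B.Finite → C.Finite →
    B.Nonempty → indep A B C → indep C B A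
  existence : ∀ {n : ℕ} (a : Fin n → M) {B C : Set M}, B.Finite → C.Finite →
    B.Nonempty → ∃ a' : Fin n → M, SameTypeOver L B a a' ∧ indep (Set.range a') B C
  stationarity : ∀ {n : ℕ} {a a' : Fin n → M} {B C : Set M}, B.Finite → C.Finite →
    B.Nonempty → SameTypeOver L B a a' → indep (Set.range a) B C →
    indep (Set.range a') B C → SameTypeOver L (B ∪ C) a a'

/-- The tuple `x` is independent from the tuple `y` over `A; B`. -/
def IndepOver {M : Type*} (indep : Set M → Set M → Set M → Prop) {n m : ℕ}
    (x : Fin n → M) (y : Fin m → M) (A B : Set M) : Prop :=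
  indep (Set.range x) A (B ∪ Set.range y) ∧ indep (Set.range x ∪ A) B (Set.range y)

/-- `g` moves maximally: for every finite set `X` and every type over `X`, some
realisation `x` of the type is independent from `g(x)` over `X; g(X)`. -/
def MovesMaximally (L : FirstOrder.Language) {M : Type*} [L.Structure M]
    (indep : Set M → Set M → Set M → Prop) (g : M ≃[L] M) : Prop :=
  ∀ (X : Set M), X.Finite → ∀ {n : ℕ} (a : Fin n → M),
    ∃ a' : Fin n → M, SameTypeOver L X a a' ∧
      IndepOver indep a' (fun i => g (a' i)) X (g '' X)

/-- `g` moves maximally (local version: only nonempty finite base sets `X`). -/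
def MovesMaximallyLoc (L : FirstOrder.Language) {M : Type*} [L.Structure M]
    (indep : Set M → Set M → Set M → Prop) (g : M ≃[L] M) : Prop :=
  ∀ (X : Set M), X.Finite → X.Nonempty → ∀ {n : ℕ} (a : Fin n → M),
    ∃ a' : Fin n → M, SameTypeOver L X a a' ∧
      IndepOver indep a' (fun i => g (a' i)) X (g '' X)

/-- The topology of pointwise convergence on the automorphism group (`M` discrete). -/
def autTopology (L : FirstOrder.Language) (M : Type*) [L.Structure M] :
    TopologicalSpace (M ≃[L] M) :=
  letI : TopologicalSpace M := ⊥
  TopologicalSpace.induced (fun (g : M ≃[L] M) (x : M) => g x) inferInstance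

/-- The topology of pointwise convergence, as an instance. -/
instance autTopologyInst : TopologicalSpace (M ≃[L] M) := autTopology L M

end TentZiegler

/-! A conjugate `k⁻¹ g k` agrees with `f` on a finite tuple `x` iff `g (k x) = k (f x)`, so `g`
has a dense conjugacy class once every pair of tuples of the same type is realised in this
way. Existence and stationarity give the amalgamation step: the restriction of an automorphism
`w` to a finite set and a conjugate of a partial map `u ↦ v` of the same type extend to a
common automorphism. Over a local relation the base must be nonempty; there one uses that
`u` and `v` have the same type over some point `c`, which the extra hypothesis provides.
Enumerating all pairs of tuples and all points, a back-and-forth construction builds `g` as a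
limit of automorphisms. -/

namespace TentZiegler

section

open Topology

variable {L : FirstOrder.Language} {M : Type*} [L.Structure M]

lemma SameTypeOver.refl {B : Set M} {n : ℕ} (x : Fin n → M) : SameTypeOver L B x x :=
  ⟨1, fun _ _ => rfl, fun _ => rfl⟩

lemma SameTypeOver.map {B : Set M} {n : ℕ} {x y : Fin n → M} (k : M ≃[L] M)
    (h : SameTypeOver L B x y) : SameTypeOver L (k '' B) (k ∘ x) (k ∘ y) := by
  obtain ⟨t, htB, ht⟩ := h
  refine ⟨k * t * k⁻¹, ?_, fun i => ?_⟩
  · rintro _ ⟨b, hb, rfl⟩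
    simp [htB b hb]
  · simp [ht i]

structure IsStationaryOver (L : FirstOrder.Language) {M : Type*} [L.Structure M]
    (indep : Set M → Set M → Set M → Prop) (B : Set M) : Prop where
  invariance : ∀ g : M ≃[L] M, (∀ b ∈ B, g b = b) →
    ∀ {A C : Set M}, A.Finite → C.Finite → indep A B C → indep (g '' A) B (g '' C)
  mono_right : ∀ {A C D : Set M}, A.Finite → C.Finite → D.Finite →
    indep A B (C ∪ D) → indep A B C
  symm : ∀ {A C : Set M}, A.Finite → C.Finite → indep A B C → indep C B A
  existence : ∀ {n : ℕ} (a : Fin n → M) {C : Set M}, C.Finite →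
    ∃ a' : Fin n → M, SameTypeOver L B a a' ∧ indep (range a') B C
  stationarity : ∀ {n : ℕ} {a a' : Fin n → M} {C : Set M}, C.Finite →
    SameTypeOver L B a a' → indep (range a) B C → indep (range a') B C →
    SameTypeOver L (B ∪ C) a a'

lemma inv_apply_eq_self {g : M ≃[L] M} {b : M} (h : g b = b) : g⁻¹ b = b := by
  conv_lhs => rw [← h]
  exact g.symm_apply_apply b

variable {indep : Set M → Set M → Set M → Prop} {B : Set M}

lemma image_eq_self_of_fixes {g : M ≃[L] M} (hg : ∀ b ∈ B, g b = b) : g '' B = B :=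
  EqOn.image_eq_self fun b hb => hg b hb

lemma IsSIR.isStationaryOver (h : IsSIR L M indep) (hB : B.Finite) :
    IsStationaryOver L indep B where
  invariance g hg _ _ hA hC hi := by
    simpa only [image_eq_self_of_fixes hg] using h.invariance g hA hB hC hi
  mono_right hA hC hD := h.monotonicity₁ hA hB hC hD
  symm hA hC := h.symmetry hA hB hC
  existence a _ hC := h.existence a hB hC
  stationarity hC := h.stationarity hB hC

lemma IsLocalSIR.isStationaryOver (h : IsLocalSIR L M indep) (hB : B.Finite)
    (hne : B.Nonempty) : IsStationaryOver L indep B where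
  invariance g hg _ _ hA hC hi := by
    simpa only [image_eq_self_of_fixes hg] using h.invariance g hA hB hC hne hi
  mono_right hA hC hD := h.monotonicity₁ hA hB hC hD hne
  symm hA hC := h.symmetry hA hB hC hne
  existence a _ hC := h.existence a hB hC hne
  stationarity hC := h.stationarity hB hC hne

namespace IsStationaryOver

lemma mono (h : IsStationaryOver L indep B) {A A' C C' : Set M} (hA' : A'.Finite)
    (hC' : C'.Finite) (hA : A ⊆ A') (hC : C ⊆ C') (hi : indep A' B C') : indep A B C := by
  have mono_right : ∀ {X Y Y' : Set M}, X.Finite → Y'.Finite → Y ⊆ Y' →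
      indep X B Y' → indep X B Y := fun hX hY' hY hi =>
    h.mono_right hX (hY'.subset hY) hY'.sdiff (by rwa [union_sdiff_cancel hY])
  exact h.symm (hC'.subset hC) (hA'.subset hA) <|
    mono_right (hC'.subset hC) hA' hA <| h.symm hA' (hC'.subset hC) <| mono_right hA' hC' hC hi

/-- Choose `k` with `k u, k v` independent from `A ∪ w A` over `B`; stationarity then gives
`ρ` fixing `A` with `ρ (k u) = w⁻¹ (k v)`, and `σ = w ρ`. -/
theorem exists_conj_extension (h : IsStationaryOver L indep B) {w : M ≃[L] M}
    (hw : ∀ b ∈ B, w b = b) {A : Set M} (hA : A.Finite) {m : ℕ} (u v : Fin m → M)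
    (huv : SameTypeOver L B u v) :
    ∃ k σ : M ≃[L] M, EqOn σ w A ∧ ∀ i, σ (k (u i)) = k (v i) := by
  obtain ⟨t, htB, ht⟩ := huv
  obtain ⟨uv, ⟨k, hkB, hk⟩, hind⟩ := h.existence (Fin.append u v) (hA.union (hA.image w))
  have hku : range (k ∘ u) ⊆ range uv := by
    rintro _ ⟨i, rfl⟩
    exact ⟨Fin.castAdd m i, by rw [← hk, Fin.append_left]; rfl⟩
  have hkv : range (k ∘ v) ⊆ range uv := by
    rintro _ ⟨i, rfl⟩
    exact ⟨Fin.natAdd m i, by rw [← hk, Fin.append_right]; rfl⟩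
  have hu : indep (range (k ∘ u)) B A :=
    h.mono (finite_range uv) (hA.union (hA.image w)) hku subset_union_left hind
  have hv : indep (range (⇑w⁻¹ ∘ k ∘ v)) B A := by
    have hkv' := h.mono (finite_range uv) (hA.union (hA.image w)) hkv subset_union_right hind
    have hv' := h.invariance w⁻¹ (fun b hb => inv_apply_eq_self (hw b hb)) (finite_range _)
      (hA.image w) hkv'
    rw [← range_comp, image_image] at hv'
    simpa only [aut_inv_apply, Language.Equiv.symm_apply_apply, image_id'] using hv'
  have hsame : SameTypeOver L B (k ∘ u) (⇑w⁻¹ ∘ k ∘ v) := by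
    refine ⟨w⁻¹ * k * t * k⁻¹, fun b hb => ?_, fun i => by simp [ht i]⟩
    simp only [aut_mul_apply, inv_apply_eq_self (hkB b hb), htB b hb, hkB b hb,
      inv_apply_eq_self (hw b hb)]
  obtain ⟨ρ, hρ, hρu⟩ := h.stationarity hA hsame hu hv
  refine ⟨k, w * ρ, fun a ha => by simp [hρ a (Or.inr ha)], fun i => ?_⟩
  simpa using congrArg w (hρu i)

end IsStationaryOver

/-- The point `c` fixed by the partial map `u ↦ v` is first sent by amalgamation over `{d}` to
a point `k₁ c` fixed by the extension `σ₁` of `w`; then one amalgamates over `{k₁ c}`. -/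
theorem IsLocalSIR.exists_conj_extension (h : IsLocalSIR L M indep) {w : M ≃[L] M} {d : M}
    (hw : w d = d) {A : Set M} (hA : A.Finite) {m : ℕ} {u v : Fin m → M} {c : M}
    (huv : SameTypeOver L {c} u v) :
    ∃ k σ : M ≃[L] M, EqOn σ w A ∧ ∀ i, σ (k (u i)) = k (v i) := by
  have hst (x : M) := h.isStationaryOver (finite_singleton x) (singleton_nonempty x)
  obtain ⟨k₁, σ₁, hσ₁, hσ₁c⟩ := (hst d).exists_conj_extension (by simpa using hw) hA
    (fun _ : Fin 1 => c) (fun _ => c) (.refl _)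
  obtain ⟨k₂, σ₂, hσ₂, hk₂⟩ := (hst (k₁ c)).exists_conj_extension (w := σ₁)
    (by simpa using hσ₁c 0) hA (k₁ ∘ u) (k₁ ∘ v) (by simpa using huv.map k₁)
  exact ⟨k₂ * k₁, σ₂, hσ₂.trans hσ₁, hk₂⟩

theorem exists_eqOn_of_eqOn_succ {F : ℕ → Set M} {w : ℕ → M ≃[L] M} (hF : Monotone F)
    (hw : ∀ j, EqOn (w (j + 1)) (w j) (F j)) (hdom : ∀ x, ∃ j, x ∈ F j)
    (hran : ∀ y, ∃ j, (w j).symm y ∈ F j) :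
    ∃ g : M ≃[L] M, ∀ j, EqOn g (w j) (F j) := by
  have hstable : ∀ {i j}, i ≤ j → EqOn (w j) (w i) (F i) := by
    intro i j hij
    induction j, hij using Nat.le_induction with
    | base => exact eqOn_refl _ _
    | succ j hij ih => exact ((hw j).mono (hF hij)).trans ih
  have hfin : ∀ {s : Set M}, s.Finite → ∃ j, s ⊆ F j := fun hs =>
    ((Filter.eventually_all_finite hs).2 fun x _ =>
      let ⟨j, hj⟩ := hdom x
      Filter.eventually_atTop.2 ⟨j, fun _ hij => hF hij hj⟩).exists
  choose st hst using hdom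
  let φ : M → M := fun x => w (st x) x
  have hφ : ∀ j, EqOn φ (w j) (F j) := fun j x hx => by
    rcases le_total (st x) j with hle | hle
    · exact (hstable hle (hst x)).symm
    · exact hstable hle hx
  have hinj : Function.Injective φ := fun x y hxy => by
    obtain ⟨j, hj⟩ := hfin (toFinite {x, y})
    rw [hφ j (hj (mem_insert x _)), hφ j (hj (mem_insert_of_mem x rfl))] at hxy
    exact (w j).injective hxy
  have hsurj : Function.Surjective φ := fun y => by
    obtain ⟨j, hj⟩ := hran y
    exact ⟨_, (hφ j hj).trans ((w j).apply_symm_apply y)⟩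
  refine ⟨{ toEquiv := .ofBijective φ ⟨hinj, hsurj⟩
            map_fun' := fun {l} f x => ?_
            map_rel' := fun {l} r x => ?_ }, hφ⟩
  · obtain ⟨j, hj⟩ := hfin ((finite_range x).insert (Language.Structure.funMap f x))
    change φ _ = Language.Structure.funMap f (φ ∘ x)
    have hx : φ ∘ x = w j ∘ x :=
      funext fun i => hφ j (hj (mem_insert_of_mem _ (mem_range_self i)))
    rw [hφ j (hj (mem_insert _ _)), (w j).map_fun, hx]
  · obtain ⟨j, hj⟩ := hfin (finite_range x)
    change Language.Structure.RelMap r (φ ∘ x) ↔ _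
    have hx : φ ∘ x = w j ∘ x := funext fun i => hφ j (hj (mem_range_self i))
    rw [hx]
    exact (w j).map_rel r x

/-- `g` is the limit of finite approximations `(F, w)`; the `j`-th step either puts a point and
its `w`-preimage into `F`, or uses `hP` to realise the `j`-th pair of tuples by a conjugate. -/
theorem exists_forall_conj_of_amalgamation [Countable M]
    (P : ∀ {m : ℕ}, (Fin m → M) → (Fin m → M) → Prop)
    (hP : ∀ (w : M ≃[L] M) {A : Set M}, A.Finite →
      ∀ {m : ℕ} (u v : Fin m → M), P u v →
        ∃ k σ : M ≃[L] M, EqOn σ w A ∧ ∀ i, σ (k (u i)) = k (v i)) :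
    ∃ g : M ≃[L] M, ∀ {m : ℕ} (u v : Fin m → M), P u v →
      ∃ k : M ≃[L] M, ∀ i, g (k (u i)) = k (v i) := by
  classical
  have : Nonempty (M ⊕ Σ m, (Fin m → M) × (Fin m → M)) :=
    ⟨.inr ⟨0, finZeroElim, finZeroElim⟩⟩
  obtain ⟨e, he⟩ := exists_surjective_nat (M ⊕ Σ m, (Fin m → M) × (Fin m → M))
  have step : ∀ (r : M ⊕ Σ m, (Fin m → M) × (Fin m → M)) (s : Finset M × (M ≃[L] M)),
      ∃ t : Finset M × (M ≃[L] M), s.1 ⊆ t.1 ∧ EqOn t.2 s.2 s.1 ∧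
        r.elim (fun x => x ∈ t.1 ∧ t.2.symm x ∈ t.1) (fun q => P q.2.1 q.2.2 →
          ∃ k : M ≃[L] M, ∀ i, k (q.2.1 i) ∈ t.1 ∧ t.2 (k (q.2.1 i)) = k (q.2.2 i)) := by
    rintro (x | ⟨m, u, v⟩) ⟨F, w⟩
    · refine ⟨(insert x (insert (w.symm x) F), w), ?_, eqOn_refl _ _, by simp⟩
      exact (Finset.subset_insert _ _).trans (Finset.subset_insert _ _)
    · by_cases huv : P u v
      · obtain ⟨k, σ, hσ, hk⟩ := hP w F.finite_toSet u v huv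
        exact ⟨(F ∪ Finset.univ.image (k ∘ u), σ), Finset.subset_union_left, hσ,
          fun _ => ⟨k, fun i => ⟨by simp, hk i⟩⟩⟩
      · exact ⟨(F, w), subset_rfl, eqOn_refl _ _, fun h => absurd h huv⟩
  choose next hsub hagree htask using step
  let s : ℕ → Finset M × (M ≃[L] M) := fun j => Nat.rec (∅, 1) (fun j t => next (e j) t) j
  have hs : ∀ j, s (j + 1) = next (e j) (s j) := fun _ => rfl
  have hpoint : ∀ x, ∃ j, x ∈ (s j).1 ∧ (s j).2.symm x ∈ (s j).1 := fun x => by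
    obtain ⟨j, hj⟩ := he (.inl x)
    have := htask (e j) (s j)
    rw [← hs, hj] at this
    exact ⟨j + 1, this⟩
  obtain ⟨g, hg⟩ := exists_eqOn_of_eqOn_succ (F := fun j => ↑(s j).1) (w := fun j => (s j).2)
    (monotone_nat_of_le_succ fun j => by simpa [hs] using hsub (e j) (s j))
    (fun j => by simpa [hs] using hagree (e j) (s j))
    (fun x => (hpoint x).imp fun _ => And.left) (fun y => (hpoint y).imp fun _ => And.right)
  refine ⟨g, fun u v huv => ?_⟩
  obtain ⟨j, hj⟩ := he (.inr ⟨_, u, v⟩)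
  have := htask (e j) (s j)
  rw [← hs, hj] at this
  obtain ⟨k, hk⟩ := this huv
  exact ⟨k, fun i => (hg (j + 1) (hk i).1).trans (hk i).2⟩

theorem exists_finite_forall_eqOn_mem_of_mem_nhds {f : M ≃[L] M} {s : Set (M ≃[L] M)}
    (hs : s ∈ 𝓝 f) :
    ∃ I : Set M, I.Finite ∧ ∀ h : M ≃[L] M, EqOn h f I → h ∈ s := by
  let _ : TopologicalSpace M := ⊥
  have _ : DiscreteTopology M := ⟨rfl⟩
  rw [show 𝓝 f = Filter.comap (fun (g : M ≃[L] M) (x : M) => g x) (𝓝 fun x => f x) from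
    nhds_induced _ _, Filter.mem_comap] at hs
  obtain ⟨s', hs', hs's⟩ := hs
  rw [nhds_pi, Filter.mem_pi] at hs'
  obtain ⟨I, hI, t, ht, hIt⟩ := hs'
  refine ⟨I, hI, fun h hh => hs's (hIt fun x hx => ?_)⟩
  simpa [hh hx, nhds_discrete] using ht x

theorem dense_conj_of_forall_sameTypeOver {g : M ≃[L] M}
    (hg : ∀ {n : ℕ} (x y : Fin n → M), SameTypeOver L ∅ x y →
      ∃ k : M ≃[L] M, ∀ i, g (k (x i)) = k (y i)) :
    Dense (range fun h : M ≃[L] M => h⁻¹ * g * h) := by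
  intro f
  rw [mem_closure_iff_nhds]
  intro s hs
  obtain ⟨I, hI, hIs⟩ := exists_finite_forall_eqOn_mem_of_mem_nhds hs
  obtain ⟨n, x, rfl⟩ := hI.fin_embedding
  obtain ⟨k, hk⟩ := hg x (f ∘ x) ⟨f, fun _ h => h.elim, fun _ => rfl⟩
  refine ⟨k⁻¹ * g * k, hIs _ ?_, k, rfl⟩
  rintro _ ⟨i, rfl⟩
  simp [hk i]

end

/-- Lemma 1.5: the automorphism group of a countable structure with a stationary
independence relation has a dense conjugacy class; the same holds for a local
stationary independence relation provided any two tuples of the same type have the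
same type over some element `c`. -/
theorem dense_conjugacy_class {L : FirstOrder.Language} {M : Type*} [L.Structure M]
    [Countable M] (indep : Set M → Set M → Set M → Prop) :
    (IsSIR L M indep →
      ∃ g₀ : M ≃[L] M, Dense (Set.range fun h : M ≃[L] M => h⁻¹ * g₀ * h)) ∧
    (IsLocalSIR L M indep →
      (∀ (n : ℕ) (a b : Fin n → M), SameTypeOver L (∅ : Set M) a b →
        ∃ c : M, SameTypeOver L ({c} : Set M) a b) →
      ∃ g₀ : M ≃[L] M, Dense (Set.range fun h : M ≃[L] M => h⁻¹ * g₀ * h)) := by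
  refine ⟨fun h => ?_, fun h H => ?_⟩
  · obtain ⟨g, hg⟩ := exists_forall_conj_of_amalgamation (fun u v => SameTypeOver L ∅ u v)
      fun w {_} hA {_} u v huv =>
        (h.isStationaryOver finite_empty).exists_conj_extension (fun _ h => h.elim) hA u v huv
    exact ⟨g, dense_conj_of_forall_sameTypeOver hg⟩
  · obtain ⟨g, hg⟩ := exists_forall_conj_of_amalgamation
      (fun u v => ∃ c, SameTypeOver L {c} u v) fun w {_} hA {_} u v huv => by
        obtain ⟨c, huv⟩ := huv
        obtain ⟨n, a, rfl⟩ := hA.fin_embedding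
        obtain ⟨d, w', hw'd, hw'a⟩ := H n a (w ∘ a) ⟨w, fun _ h => h.elim, fun _ => rfl⟩
        obtain ⟨k, σ, hσ, hk⟩ := h.exists_conj_extension (hw'd d rfl) (finite_range a) huv
        exact ⟨k, σ, hσ.trans (by rintro _ ⟨i, rfl⟩; exact hw'a i), hk⟩
    exact ⟨g, dense_conj_of_forall_sameTypeOver fun x y hxy => hg x y (H _ x y hxy)⟩

end TentZiegler
end

section
/- Let M be a countable structure with a (local) stationary independence relation and G = Aut(M). Then: (1) if A ⫫_B C and D is an arbitrary finite subset of M, there is D' with tp(D'/B∪C) = tp(D/B∪C) and A ⫫_B C∪D'; (2) if A ⫫_B C and g_1, …, g_n ∈ G, there is e ∈ Fix(B∪C) such that A ⫫_B C ∪ g_1^e(C) ∪ … ∪ g_n^e(C). -/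
open FirstOrder Set

namespace TentZiegler

lemma image_eq_of_fix {L : FirstOrder.Language} {M : Type*} [L.Structure M]
    (g : M ≃[L] M) {S : Set M} (h : ∀ x ∈ S, g x = x) : g '' S = S := by
  ext x
  constructor
  · rintro ⟨y, hy, rfl⟩
    rw [h y hy]; exact hy
  · intro hx
    exact ⟨x, hx, h x hx⟩

lemma SameTypeOver.symm' {L : FirstOrder.Language} {M : Type*} [L.Structure M]
    {B : Set M} {n : ℕ} {x y : Fin n → M} (h : SameTypeOver L B x y) :
    SameTypeOver L B y x := by
  obtain ⟨g, hB, hx⟩ := h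
  refine ⟨g.symm, fun b hb => ?_, fun i => ?_⟩
  · conv_lhs => rw [← hB b hb]
    exact g.symm_apply_apply b
  · rw [← hx i]; exact g.symm_apply_apply _

lemma exists_enum {M : Type*} {A : Set M} (hA : A.Finite) :
    ∃ (n : ℕ) (a : Fin n → M), Set.range a = A := by
  obtain ⟨n, f, hf⟩ := hA.fin_embedding
  exact ⟨n, f, hf⟩

/-- Key step: from `A ⫫_B C` and `A ⫫_{B∪C} D'` deduce `A ⫫_B C ∪ D'`. -/
lemma indep_union_of_indep {L : FirstOrder.Language} {M : Type*} [L.Structure M]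
    {indep : Set M → Set M → Set M → Prop} (hindep : IsLocalSIR L M indep)
    {A B C D : Set M} (hA : A.Finite) (hB : B.Finite) (hC : C.Finite) (hD : D.Finite)
    (hBne : B.Nonempty) (h1 : indep A B C) (h2 : indep A (B ∪ C) D) :
    indep A B (C ∪ D) := by
  obtain ⟨n, a, ha⟩ := exists_enum hA
  obtain ⟨a'', hst, hind⟩ := hindep.existence a hB (hC.union hD) hBne
  have hra'' : (Set.range a'').Finite := Set.finite_range a''
  have h1'' : indep (Set.range a'') B C :=
    hindep.monotonicity₁ hra'' hB hC hD hBne hind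
  have h2'' : indep (Set.range a'') (B ∪ C) D :=
    hindep.monotonicity₂ hra'' hB hC hD hBne hind
  -- same type over B ∪ C
  have hst1 : SameTypeOver L (B ∪ C) a a'' :=
    hindep.stationarity hB hC hBne hst (ha ▸ h1) h1''
  -- same type over B ∪ C ∪ D
  have hst2 : SameTypeOver L (B ∪ C ∪ D) a a'' :=
    hindep.stationarity (hB.union hC) hD (hBne.mono Set.subset_union_left)
      hst1 (ha ▸ h2) h2''
  obtain ⟨g, hfix, hmap⟩ := hst2.symm'
  have key := hindep.invariance g hra'' hB (hC.union hD) hBne hind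
  have e1 : g '' Set.range a'' = A := by
    rw [← Set.range_comp]
    rw [show (g ∘ a'') = a from funext fun i => hmap i, ha]
  have e2 : g '' B = B :=
    image_eq_of_fix g fun x hx => hfix x (Or.inl (Or.inl hx))
  have e3 : g '' (C ∪ D) = C ∪ D := by
    refine image_eq_of_fix g fun x hx => hfix x ?_
    rcases hx with hx | hx
    · exact Or.inl (Or.inr hx)
    · exact Or.inr hx
  rwa [e1, e2, e3] at key

/-- Lemma 3.1: (1) given `A ⫫_B C` and any finite `D` there is `D'` of the same type
over `B ∪ C` with `A ⫫_B C ∪ D'`; (2) given `A ⫫_B C` and automorphisms `g₁,…,gₙ`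
there is `e` fixing `B ∪ C` pointwise with `A ⫫_B C ∪ g₁ᵉ(C) ∪ … ∪ gₙᵉ(C)`. -/
theorem tool_lemma {L : FirstOrder.Language} {M : Type*} [L.Structure M] [Countable M]
    (indep : Set M → Set M → Set M → Prop) (hindep : IsLocalSIR L M indep) :
    (∀ (A B C : Set M), A.Finite → B.Finite → C.Finite → B.Nonempty →
      indep A B C → ∀ {n : ℕ} (d : Fin n → M),
      ∃ d' : Fin n → M, SameTypeOver L (B ∪ C) d d' ∧
        indep A B (C ∪ Set.range d')) ∧
    (∀ (A B C : Set M), A.Finite → B.Finite → C.Finite → B.Nonempty →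
      indep A B C → ∀ {k : ℕ} (gs : Fin k → M ≃[L] M),
      ∃ e : M ≃[L] M, (∀ x ∈ B ∪ C, e x = x) ∧
        indep A B (C ∪ ⋃ i : Fin k, (e⁻¹ * gs i * e) '' C)) := by
  have part1 : ∀ (A B C : Set M), A.Finite → B.Finite → C.Finite → B.Nonempty →
      indep A B C → ∀ {n : ℕ} (d : Fin n → M),
      ∃ d' : Fin n → M, SameTypeOver L (B ∪ C) d d' ∧
        indep A B (C ∪ Set.range d') := by
    intro A B C hA hB hC hBne h n d
    have hBCne : (B ∪ C).Nonempty := hBne.mono Set.subset_union_left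
    obtain ⟨d', hst, hind⟩ := hindep.existence d (hB.union hC) hA hBCne
    have hsym : indep A (B ∪ C) (Set.range d') :=
      hindep.symmetry (Set.finite_range d') (hB.union hC) hA hBCne hind
    exact ⟨d', hst, indep_union_of_indep hindep hA hB hC (Set.finite_range d')
      hBne h hsym⟩
  refine ⟨part1, ?_⟩
  intro A B C hA hB hC hBne h k gs
  have hDfin : (⋃ i : Fin k, gs i '' C).Finite :=
    Set.finite_iUnion fun i => hC.image _
  obtain ⟨m, d, hd⟩ := exists_enum hDfin
  obtain ⟨d', hst, hind⟩ := part1 A B C hA hB hC hBne h d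
  obtain ⟨hh, hfix, hmap⟩ := hst
  have efix : ∀ x ∈ B ∪ C, hh⁻¹ x = x := by
    intro x hx
    show hh.symm x = x
    conv_lhs => rw [← hfix x hx]
    exact hh.symm_apply_apply x
  refine ⟨hh⁻¹, efix, ?_⟩
  have hsub : (C ∪ ⋃ i : Fin k, ((hh⁻¹)⁻¹ * gs i * hh⁻¹) '' C) ⊆
      C ∪ Set.range d' := by
    rintro x (hx | hx)
    · exact Or.inl hx
    · simp only [Set.mem_iUnion, Set.mem_image] at hx
      obtain ⟨i, c, hc, rfl⟩ := hx
      right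
      have e1 : ((hh⁻¹)⁻¹ * gs i * hh⁻¹) c = hh (gs i c) := by
        rw [aut_mul_apply, aut_mul_apply, efix c (Or.inr hc), inv_inv]
      have : gs i c ∈ Set.range d := by
        rw [hd]
        exact Set.mem_iUnion.mpr ⟨i, Set.mem_image_of_mem _ hc⟩
      obtain ⟨j, hj⟩ := this
      rw [e1, ← hj, hmap j]
      exact Set.mem_range_self j
  have hTfin : (C ∪ ⋃ i : Fin k, ((hh⁻¹)⁻¹ * gs i * hh⁻¹) '' C).Finite :=
    hC.union (Set.finite_iUnion fun i => hC.image _)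
  have hTS := Set.union_eq_right.mpr hsub
  rw [← hTS] at hind
  exact hindep.monotonicity₁ hA hB hTfin (hC.union (Set.finite_range d')) hBne hind

end TentZiegler
end

section
/- Let M be a countable structure with a (local) stationary independence relation and G = Aut(M). Let g ∈ G move maximally, let X, Y, C be finite (nonempty) sets with g(X) = Y and X ⫫_Y C, and let x̄ be a finite tuple in M. Then there is a ∈ Fix(X ∪ Y) such that g^a(x̄) ⫫_Y C. -/
open FirstOrder Set

namespace TentZiegler

/-- Any `Fin (n + m)`-tuple's range splits as the union of the ranges of its two parts. -/
lemma range_split' {α : Type*} {n m : ℕ} (u : Fin (n + m) → α) :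
    Set.range u = Set.range (fun i : Fin n => u (Fin.castAdd m i)) ∪
      Set.range (fun j : Fin m => u (Fin.natAdd n j)) := by
  ext z
  simp only [Set.mem_union, Set.mem_range]
  constructor
  · rintro ⟨i, rfl⟩
    exact Fin.addCases (fun i => Or.inl ⟨i, rfl⟩) (fun j => Or.inr ⟨j, rfl⟩) i
  · rintro (⟨i, rfl⟩ | ⟨j, rfl⟩)
    exacts [⟨_, rfl⟩, ⟨_, rfl⟩]

/-- Lemma 3.4: if `g` moves maximally, `g(X) = Y`, `X ⫫_Y C` and `x` is a tuple,
then there is `a ∈ Fix(X ∪ Y)` with `g^a(x) ⫫_Y C`. -/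
theorem zug {L : FirstOrder.Language} {M : Type*} [L.Structure M] [Countable M]
    (indep : Set M → Set M → Set M → Prop) (hindep : IsLocalSIR L M indep)
    (g : M ≃[L] M) (hg : MovesMaximallyLoc L indep g)
    (X Y C : Set M) (hXf : X.Finite) (hYf : Y.Finite) (hCf : C.Finite)
    (hXne : X.Nonempty) (hYne : Y.Nonempty) (hCne : C.Nonempty)
    (hgX : g '' X = Y) (hXYC : indep X Y C) {n : ℕ} (x : Fin n → M) :
    ∃ a : M ≃[L] M, (∀ z ∈ X ∪ Y, a z = z) ∧
      indep (Set.range fun i => (a⁻¹ * g * a) (x i)) Y C := by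
  classical
  -- enumerate C
  obtain ⟨m, cemb, hcr⟩ := hCf.fin_embedding
  set c : Fin m → M := fun j => cemb j with hcdef
  have hcr' : Set.range c = C := hcr
  -- combined tuple
  set t : Fin (n + m) → M := Fin.append x c with htdef
  have hXYfin : (X ∪ Y).Finite := hXf.union hYf
  have hXYne : (X ∪ Y).Nonempty := hXne.inl
  obtain ⟨t', ⟨a, haXY, hat⟩, hi, -⟩ := hg (X ∪ Y) hXYfin hXYne t
  set x' : Fin n → M := fun i => t' (Fin.castAdd m i) with hx'def
  set c' : Fin m → M := fun j => t' (Fin.natAdd n j) with hc'def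
  -- finiteness facts
  have ft' : (Set.range t').Finite := Set.finite_range _
  have fx' : (Set.range x').Finite := Set.finite_range _
  have fc' : (Set.range c').Finite := Set.finite_range _
  have fgx' : (Set.range (fun i => g (x' i))).Finite := Set.finite_range _
  have fgc' : (Set.range (fun j => g (c' j))).Finite := Set.finite_range _
  have fgXY : ((g '' (X ∪ Y)) ∪ Set.range (fun j => g (c' j))).Finite :=
    (hXYfin.image g).union fgc'
  have hsplit_t' : Set.range t' = Set.range x' ∪ Set.range c' := range_split' t'
  have hsplit_gt' : Set.range (fun i => g (t' i)) =
      Set.range (fun i => g (x' i)) ∪ Set.range (fun j => g (c' j)) :=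
    range_split' (fun i => g (t' i))
  -- Step 1 : range t' ⫫_{X∪Y} g(x')
  have h1 : indep (Set.range t') (X ∪ Y) (Set.range (fun i => g (x' i))) := by
    have hu : (g '' (X ∪ Y)) ∪ Set.range (fun i => g (t' i)) =
        Set.range (fun i => g (x' i)) ∪
          ((g '' (X ∪ Y)) ∪ Set.range (fun j => g (c' j))) := by
      rw [hsplit_gt']
      ext z
      simp only [Set.mem_union]
      tauto
    exact hindep.monotonicity₁ ft' hXYfin fgx' fgXY hXYne (hu ▸ hi)
  -- Step 2 : g(x') ⫫_{X∪Y} range c'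
  have h2 : indep (Set.range (fun i => g (x' i))) (X ∪ Y) (Set.range c') := by
    have hsym := hindep.symmetry ft' hXYfin fgx' hXYne h1
    have hu2 : Set.range t' = Set.range c' ∪ Set.range x' := by
      rw [hsplit_t', Set.union_comm]
    exact hindep.monotonicity₁ fgx' hXYfin fc' fx' hXYne (hu2 ▸ hsym)
  -- a fixes X and Y pointwise
  have haX : ∀ z ∈ X, a z = z := fun z hz => haXY z (Or.inl hz)
  have haY : ∀ z ∈ Y, a z = z := fun z hz => haXY z (Or.inr hz)
  have himgX : a '' X = X := by
    rw [Set.image_congr haX]; exact Set.image_id' X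
  have himgY : a '' Y = Y := by
    rw [Set.image_congr haY]; exact Set.image_id' Y
  -- a maps x to x' and c to c'
  have hax : ∀ i, a (x i) = x' i := by
    intro i
    have := hat (Fin.castAdd m i)
    rwa [htdef, Fin.append_left] at this
  have hac : ∀ j, a (c j) = c' j := by
    intro j
    have := hat (Fin.natAdd n j)
    rwa [htdef, Fin.append_right] at this
  have himgC : a '' C = Set.range c' := by
    rw [← hcr', ← Set.range_comp]
    exact congrArg _ (funext fun j => hac j)
  -- Step 3 : transport the hypothesis X ⫫_Y C to X ⫫_Y C'
  have h3 : indep X Y (Set.range c') := by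
    have := hindep.invariance a hXf hYf hCf hYne hXYC
    rwa [himgX, himgY, himgC] at this
  have h4 : indep (Set.range c') Y X := hindep.symmetry hXf hYf fc' hYne h3
  -- Step 5 : C' ⫫_{Y∪X} g(x')
  have h5 : indep (Set.range c') (Y ∪ X) (Set.range (fun i => g (x' i))) := by
    have := hindep.symmetry fgx' hXYfin fc' hXYne h2
    rwa [Set.union_comm X Y] at this
  -- Step 6 : transitivity gives C' ⫫_Y g(x')
  have h6 : indep (Set.range c') Y (Set.range (fun i => g (x' i))) :=
    hindep.transitivity fc' hYf hXf fgx' hYne h4 h5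
  have h7 : indep (Set.range (fun i => g (x' i))) Y (Set.range c') :=
    hindep.symmetry fc' hYf fgx' hYne h6
  -- Step 8 : pull back by a⁻¹
  refine ⟨a, haXY, ?_⟩
  have h8 := hindep.invariance a.symm fgx' hYf fc' hYne h7
  have hsY : a.symm '' Y = Y := by
    have : ∀ z ∈ Y, a.symm z = z := by
      intro z hz
      conv_lhs => rw [← haY z hz]
      exact a.symm_apply_apply z
    rw [Set.image_congr this]; exact Set.image_id' Y
  have hsC : a.symm '' Set.range c' = C := by
    rw [← Set.range_comp, ← hcr']
    refine congrArg _ (funext fun j => ?_)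
    show a.symm (c' j) = c j
    rw [← hac j, a.symm_apply_apply]
  have hsgx' : a.symm '' Set.range (fun i => g (x' i)) =
      Set.range (fun i => (a⁻¹ * g * a) (x i)) := by
    rw [← Set.range_comp]
    refine congrArg _ (funext fun i => ?_)
    show a.symm (g (x' i)) = (a⁻¹ * g * a) (x i)
    rw [← hax i]
    rfl
  rwa [hsY, hsC, hsgx'] at h8

end TentZiegler
end

section
/- Let U be a Urysohn space and g an unbounded isometry of U. Then for any points x_1, x_2 ∈ U and any N > 0 there is a point y ∈ U such that (y, x_1, x_2) is geodesic, i.e. d(y, x_2) = d(y, x_1) + d(x_1, x_2), and d(y, g(y)) ≥ N. -/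
open Metric Set

namespace TentZieglerU

/-- Lemma 4.3: for an unbounded isometry `g` and points `x₁, x₂` there are points `y`
with `(y, x₁, x₂)` geodesic and `d(y, g y)` arbitrarily large. -/
theorem reflection_prep {U : Type*} [MetricSpace U] [Nonempty U] [CompleteSpace U]
    [TopologicalSpace.SeparableSpace U] (hU : FinitelyInjective U)
    (g : U ≃ᵢ U) (hg : IsUnbounded g) :
    ∀ x₁ x₂ : U, ∀ N : ℝ, 0 < N →
      ∃ y : U, dist y x₂ = dist y x₁ + dist x₁ x₂ ∧ N ≤ dist y (g y) := by
  intro x₁ x₂ N hN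
  set c := dist x₁ (g x₁) with hc
  set t := (c + N) / 2 with ht
  obtain ⟨z, hz⟩ := hg (2 * (t + dist x₁ x₂) + c)
  set a := dist x₁ z with ha
  set s := a - t with hs
  have hgdist : ∀ u v : U, dist (g u) (g v) = dist u v := fun u v => g.dist_eq u v
  have hc0 : 0 ≤ c := dist_nonneg
  have hρ0 : 0 ≤ dist x₁ x₂ := dist_nonneg
  have ht0 : 0 ≤ t := by rw [ht]; linarith
  have hza : dist z x₁ = a := by rw [ha, dist_comm]
  have hD : dist z (g z) ≤ 2 * a + c := by
    calc dist z (g z) ≤ dist z x₁ + dist x₁ (g x₁) + dist (g x₁) (g z) :=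
          dist_triangle4 _ _ _ _
      _ = 2 * a + c := by rw [hgdist, hza, ← ha]; ring
  have hat : t + dist x₁ x₂ < a := by linarith
  have hs0 : 0 ≤ s := by rw [hs]; linarith
  set f : U → ℝ := fun x => min (s + dist z x) (t + dist x₁ x) with hf
  have hkat : ∀ x x' : U, |f x - f x'| ≤ dist x x' ∧ dist x x' ≤ f x + f x' := by
    intro x x'
    have T1 : dist x x' ≤ dist z x + dist z x' := by
      rw [dist_comm z x]; exact dist_triangle _ _ _
    have T2 : dist x x' ≤ dist x₁ x + dist x₁ x' := by
      rw [dist_comm x₁ x]; exact dist_triangle _ _ _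
    have T3 : dist x x' ≤ dist z x + a + dist x₁ x' := by
      rw [dist_comm z x, ← hza]
      exact dist_triangle4 _ _ _ _
    have T4 : dist x x' ≤ dist x₁ x + a + dist z x' := by
      rw [dist_comm x₁ x, ha]
      exact dist_triangle4 _ _ _ _
    have U1 : dist z x ≤ dist z x' + dist x' x := dist_triangle _ _ _
    have U2 : dist x₁ x ≤ dist x₁ x' + dist x' x := dist_triangle _ _ _
    have U3 : dist z x' ≤ dist z x + dist x x' := dist_triangle _ _ _
    have U4 : dist x₁ x' ≤ dist x₁ x + dist x x' := dist_triangle _ _ _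
    have hcomm : dist x' x = dist x x' := dist_comm _ _
    constructor
    · rw [abs_sub_le_iff]
      rcases min_cases (s + dist z x) (t + dist x₁ x) with ⟨h1, h1'⟩ | ⟨h1, h1'⟩ <;>
        rcases min_cases (s + dist z x') (t + dist x₁ x') with ⟨h2, h2'⟩ | ⟨h2, h2'⟩ <;>
        constructor <;> simp only [hf] <;> linarith
    · rcases min_cases (s + dist z x) (t + dist x₁ x) with ⟨h1, h1'⟩ | ⟨h1, h1'⟩ <;>
        rcases min_cases (s + dist z x') (t + dist x₁ x') with ⟨h2, h2'⟩ | ⟨h2, h2'⟩ <;>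
        simp only [hf] <;> linarith
  obtain ⟨y, hy⟩ := hU {x₁, x₂, z, g z}
    (((((Set.finite_singleton (g z)).insert z).insert x₂).insert x₁))
    f (fun x _ x' _ => hkat x x')
  have hy1 : dist y x₁ = f x₁ := hy x₁ (by simp)
  have hy2 : dist y x₂ = f x₂ := hy x₂ (by simp)
  have hyz : dist y z = f z := hy z (by simp)
  have hyg : dist y (g z) = f (g z) := hy (g z) (by simp)
  have hfx1 : f x₁ = t := by
    simp only [hf, dist_self] at *
    rw [hza]
    have : t ≤ s + a := by linarith
    simpa using min_eq_right (by linarith : t + 0 ≤ s + a)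
  have hfx2 : f x₂ = t + dist x₁ x₂ := by
    have htr : a ≤ dist x₁ x₂ + dist z x₂ := by
      rw [ha, dist_comm z x₂]; exact dist_triangle _ _ _
    simp only [hf]
    exact min_eq_right (by linarith)
  have hfz : f z = s := by
    simp only [hf, dist_self, add_zero]
    have : a ≤ t + dist x₁ z := by rw [← ha]; linarith
    exact min_eq_left (by linarith)
  have hfgz : s + N ≤ f (g z) := by
    have h1 : N ≤ dist z (g z) := by linarith
    have h2 : a ≤ c + dist x₁ (g z) := by
      calc a = dist (g x₁) (g z) := by rw [hgdist, ← ha]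
        _ ≤ dist (g x₁) x₁ + dist x₁ (g z) := dist_triangle _ _ _
        _ = c + dist x₁ (g z) := by rw [dist_comm (g x₁) x₁, ← hc]
    simp only [hf]
    refine le_min (by linarith) (by rw [ht] at *; linarith)
  refine ⟨y, ?_, ?_⟩
  · rw [hy2, hy1, hfx2, hfx1]
  · have h1 : dist y (g z) ≤ dist y (g y) + dist (g y) (g z) := dist_triangle _ _ _
    have h2 : dist (g y) (g z) = dist y z := hgdist y z
    linarith [hyz, hyg, hfz, hfgz]

end TentZieglerU
end

section
/- Let U be a Urysohn space and g an unbounded isometry of U. Then for any point x ∈ U and any N > 0 there is a point z ∈ U with d(z, g(z)) ≥ N such that (z, x, g(x), g(z)) is geodesic, i.e. d(z, g(z)) = d(z, x) + d(x, g(x)) + d(g(x), g(z)). -/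
open Metric Set

namespace TentZieglerU

/-- Realize a point at prescribed distances from four given points, provided the
prescription satisfies the Katětov conditions. -/
lemma realize4 {U : Type*} [MetricSpace U] (hU : FinitelyInjective U)
    (p₁ p₂ p₃ p₄ : U) (A₁ A₂ A₃ A₄ : ℝ)
    (h1 : 0 ≤ A₁) (h2 : 0 ≤ A₂) (h3 : 0 ≤ A₃) (h4 : 0 ≤ A₄)
    (s12 : dist p₁ p₂ ≤ A₁ + A₂) (s13 : dist p₁ p₃ ≤ A₁ + A₃) (s14 : dist p₁ p₄ ≤ A₁ + A₄)
    (s23 : dist p₂ p₃ ≤ A₂ + A₃) (s24 : dist p₂ p₄ ≤ A₂ + A₄) (s34 : dist p₃ p₄ ≤ A₃ + A₄)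
    (l12 : A₁ ≤ A₂ + dist p₁ p₂) (l21 : A₂ ≤ A₁ + dist p₁ p₂)
    (l13 : A₁ ≤ A₃ + dist p₁ p₃) (l31 : A₃ ≤ A₁ + dist p₁ p₃)
    (l14 : A₁ ≤ A₄ + dist p₁ p₄) (l41 : A₄ ≤ A₁ + dist p₁ p₄)
    (l23 : A₂ ≤ A₃ + dist p₂ p₃) (l32 : A₃ ≤ A₂ + dist p₂ p₃)
    (l24 : A₂ ≤ A₄ + dist p₂ p₄) (l42 : A₄ ≤ A₂ + dist p₂ p₄)
    (l34 : A₃ ≤ A₄ + dist p₃ p₄) (l43 : A₄ ≤ A₃ + dist p₃ p₄) :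
    ∃ u : U, dist u p₁ = A₁ ∧ dist u p₂ = A₂ ∧ dist u p₃ = A₃ ∧ dist u p₄ = A₄ := by
  set f : U → ℝ := fun p =>
    min (min (A₁ + dist p p₁) (A₂ + dist p p₂)) (min (A₃ + dist p p₃) (A₄ + dist p p₄)) with hf
  have hf1 : ∀ p, f p ≤ A₁ + dist p p₁ := by
    intro p; simp only [hf]; exact (min_le_left _ _).trans (min_le_left _ _)
  have hf2 : ∀ p, f p ≤ A₂ + dist p p₂ := by
    intro p; simp only [hf]; exact (min_le_left _ _).trans (min_le_right _ _)
  have hf3 : ∀ p, f p ≤ A₃ + dist p p₃ := by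
    intro p; simp only [hf]; exact (min_le_right _ _).trans (min_le_left _ _)
  have hf4 : ∀ p, f p ≤ A₄ + dist p p₄ := by
    intro p; simp only [hf]; exact (min_le_right _ _).trans (min_le_right _ _)
  have hcases : ∀ p, f p = A₁ + dist p p₁ ∨ f p = A₂ + dist p p₂ ∨
      f p = A₃ + dist p p₃ ∨ f p = A₄ + dist p p₄ := by
    intro p
    simp only [hf]
    rcases min_cases (min (A₁ + dist p p₁) (A₂ + dist p p₂))
        (min (A₃ + dist p p₃) (A₄ + dist p p₄)) with ⟨h, -⟩ | ⟨h, -⟩ <;> rw [h]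
    · rcases min_cases (A₁ + dist p p₁) (A₂ + dist p p₂) with ⟨h2, -⟩ | ⟨h2, -⟩ <;> rw [h2]
      · exact Or.inl rfl
      · exact Or.inr (Or.inl rfl)
    · rcases min_cases (A₃ + dist p p₃) (A₄ + dist p p₄) with ⟨h2, -⟩ | ⟨h2, -⟩ <;> rw [h2]
      · exact Or.inr (Or.inr (Or.inl rfl))
      · exact Or.inr (Or.inr (Or.inr rfl))
  have hlip : ∀ p q : U, f p ≤ f q + dist p q := by
    intro p q
    rcases hcases q with h | h | h | h <;> rw [h]
    · linarith [hf1 p, dist_triangle p q p₁]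
    · linarith [hf2 p, dist_triangle p q p₂]
    · linarith [hf3 p, dist_triangle p q p₃]
    · linarith [hf4 p, dist_triangle p q p₄]
  have hsum : ∀ p q : U, dist p q ≤ f p + f q := by
    intro p q
    rcases hcases p with hp | hp | hp | hp <;> rcases hcases q with hq | hq | hq | hq <;>
      rw [hp, hq] <;>
      linarith [dist_triangle4 p p₁ p₁ q, dist_triangle4 p p₁ p₂ q, dist_triangle4 p p₁ p₃ q,
        dist_triangle4 p p₁ p₄ q, dist_triangle4 p p₂ p₁ q, dist_triangle4 p p₂ p₂ q,
        dist_triangle4 p p₂ p₃ q, dist_triangle4 p p₂ p₄ q, dist_triangle4 p p₃ p₁ q,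
        dist_triangle4 p p₃ p₂ q, dist_triangle4 p p₃ p₃ q, dist_triangle4 p p₃ p₄ q,
        dist_triangle4 p p₄ p₁ q, dist_triangle4 p p₄ p₂ q, dist_triangle4 p p₄ p₃ q,
        dist_triangle4 p p₄ p₄ q, dist_comm p₁ q, dist_comm p₂ q, dist_comm p₃ q,
        dist_comm p₄ q, dist_comm p₁ p₂, dist_comm p₁ p₃, dist_comm p₁ p₄, dist_comm p₂ p₃,
        dist_comm p₂ p₄, dist_comm p₃ p₄, dist_self p₁, dist_self p₂, dist_self p₃,
        dist_self p₄]
  obtain ⟨y, hy⟩ := hU {p₁, p₂, p₃, p₄}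
    (Set.Finite.insert _ (Set.Finite.insert _ (Set.Finite.insert _ (Set.finite_singleton _)))) f
    (by
      intro p hp q hq
      exact ⟨abs_sub_le_iff.mpr ⟨by linarith [hlip p q, dist_comm p q],
        by linarith [hlip q p, dist_comm p q]⟩, hsum p q⟩)
  have e1 : f p₁ = A₁ := by
    refine le_antisymm ?_ ?_
    · have := hf1 p₁; rw [dist_self] at this; linarith
    · simp only [hf]
      refine le_min (le_min ?_ ?_) (le_min ?_ ?_)
      · linarith [dist_self p₁]
      · exact l12
      · exact l13
      · exact l14
  have e2 : f p₂ = A₂ := by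
    refine le_antisymm ?_ ?_
    · have := hf2 p₂; rw [dist_self] at this; linarith
    · simp only [hf]
      refine le_min (le_min ?_ ?_) (le_min ?_ ?_)
      · linarith [l21, dist_comm p₂ p₁]
      · linarith [dist_self p₂]
      · exact l23
      · exact l24
  have e3 : f p₃ = A₃ := by
    refine le_antisymm ?_ ?_
    · have := hf3 p₃; rw [dist_self] at this; linarith
    · simp only [hf]
      refine le_min (le_min ?_ ?_) (le_min ?_ ?_)
      · linarith [l31, dist_comm p₃ p₁]
      · linarith [l32, dist_comm p₃ p₂]
      · linarith [dist_self p₃]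
      · exact l34
  have e4 : f p₄ = A₄ := by
    refine le_antisymm ?_ ?_
    · have := hf4 p₄; rw [dist_self] at this; linarith
    · simp only [hf]
      refine le_min (le_min ?_ ?_) (le_min ?_ ?_)
      · linarith [l41, dist_comm p₄ p₁]
      · linarith [l42, dist_comm p₄ p₂]
      · linarith [l43, dist_comm p₄ p₃]
      · linarith [dist_self p₄]
  refine ⟨y, ?_, ?_, ?_, ?_⟩
  · rw [hy p₁ (by simp)]; exact e1
  · rw [hy p₂ (by simp)]; exact e2
  · rw [hy p₃ (by simp)]; exact e3
  · rw [hy p₄ (by simp)]; exact e4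

/-- Lemma 4.4: for an unbounded isometry `g` and a point `x` there are points `z` with
`d(z, g z)` arbitrarily large such that `(z, x, g x, g z)` is geodesic. -/
theorem reflection {U : Type*} [MetricSpace U] [Nonempty U] [CompleteSpace U]
    [TopologicalSpace.SeparableSpace U] (hU : FinitelyInjective U)
    (g : U ≃ᵢ U) (hg : IsUnbounded g) :
    ∀ x : U, ∀ N : ℝ, 0 < N →
      ∃ z : U, N ≤ dist z (g z) ∧
        dist z (g z) = dist z x + dist x (g x) + dist (g x) (g z) := by
  intro x N hN
  obtain ⟨v, hv0⟩ := hg (2 * N + 3 * dist x (g x))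
  obtain ⟨D, hD⟩ : ∃ r : ℝ, r = dist x (g x) := ⟨_, rfl⟩
  obtain ⟨a, ha⟩ : ∃ r : ℝ, r = dist x v := ⟨_, rfl⟩
  obtain ⟨b, hb⟩ : ∃ r : ℝ, r = dist x (g v) := ⟨_, rfl⟩
  obtain ⟨e, he⟩ : ∃ r : ℝ, r = dist (g x) v := ⟨_, rfl⟩
  obtain ⟨M, hM⟩ : ∃ r : ℝ, r = dist v (g v) := ⟨_, rfl⟩
  have hv : 2 * N + 3 * D < M := by rw [hD, hM]; exact hv0
  have hD0 : 0 ≤ D := by rw [hD]; exact dist_nonneg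
  have ha0 : 0 ≤ a := by rw [ha]; exact dist_nonneg
  have hb0 : 0 ≤ b := by rw [hb]; exact dist_nonneg
  have he0 : 0 ≤ e := by rw [he]; exact dist_nonneg
  have hgxgv : dist (g x) (g v) = a := by rw [g.dist_eq, ha]
  have hgvgx : dist (g v) (g x) = a := by rw [dist_comm, hgxgv]
  have t1 : M ≤ a + b := by rw [hM, ha, hb, dist_comm x v]; exact dist_triangle v x (g v)
  have t2 : b ≤ D + a := by rw [hb, hD, ← hgxgv]; exact dist_triangle x (g x) (g v)
  have t4 : e ≤ D + a := by rw [he, hD, ha, dist_comm x (g x)]; exact dist_triangle (g x) x v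
  have t5 : a ≤ D + e := by rw [ha, hD, he]; exact dist_triangle x (g x) v
  have t6 : a ≤ b + M := by rw [ha, hb, hM, dist_comm v (g v)]; exact dist_triangle x (g v) v
  have t7 : D ≤ b + a := by rw [hD, hb, ← hgvgx]; exact dist_triangle x (g v) (g x)
  have haN : N + D < a := by linarith
  obtain ⟨c₁, hc₁⟩ : ∃ r : ℝ, r = min (D + a) e := ⟨_, rfl⟩
  have hcu : c₁ ≤ D + a := by rw [hc₁]; exact min_le_left _ _
  have hce : c₁ ≤ e := by rw [hc₁]; exact min_le_right _ _
  have hcl : a - D ≤ c₁ := by rw [hc₁]; exact le_min (by linarith) (by linarith)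
  have hc0 : 0 < c₁ := by linarith
  obtain ⟨R, hR⟩ : ∃ r : ℝ, r = a + b + M + D + N + 1 := ⟨_, rfl⟩
  obtain ⟨G, hG⟩ : ∃ r : ℝ, r = max (max (R + D - b) (R - a)) (R + c₁ - M) := ⟨_, rfl⟩
  have hG1 : R + D - b ≤ G := by rw [hG]; exact (le_max_left _ _).trans (le_max_left _ _)
  have hG2 : R - a ≤ G := by rw [hG]; exact (le_max_right _ _).trans (le_max_left _ _)
  have hG3 : R + c₁ - M ≤ G := by rw [hG]; exact le_max_right _ _
  have hGu1 : G ≤ R + D + b := by rw [hG]; refine max_le (max_le ?_ ?_) ?_ <;> linarith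
  have hGu2 : G ≤ R + a := by rw [hG]; refine max_le (max_le ?_ ?_) ?_ <;> linarith
  have hGu3 : G ≤ R + c₁ + M := by rw [hG]; refine max_le (max_le ?_ ?_) ?_ <;> linarith
  have hGs : G < R + c₁ - (2 * N + D) := by
    rw [hG]; refine max_lt (max_lt ?_ ?_) ?_ <;> linarith
  have hG0 : 0 ≤ G := by linarith
  obtain ⟨u, hux, hugx, huv, hugv⟩ :=
    realize4 hU x (g x) v (g v) (R + D) R (R + c₁) G
      (by linarith) (by linarith) (by linarith) hG0
      (by rw [← hD]; linarith) (by rw [← ha]; linarith) (by rw [← hb]; linarith)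
      (by rw [← he]; linarith) (by rw [hgxgv]; linarith) (by rw [← hM]; linarith)
      (by rw [← hD]) (by rw [← hD]; linarith)
      (by rw [← ha]; linarith) (by rw [← ha]; linarith)
      (by rw [← hb]; linarith) (by rw [← hb]; linarith)
      (by rw [← he]; linarith) (by rw [← he]; linarith)
      (by rw [hgxgv]; linarith) (by rw [hgxgv]; linarith)
      (by rw [← hM]; linarith) (by rw [← hM]; linarith)
  have hxu : dist x u = R + D := by rw [dist_comm]; exact hux
  have hgxu : dist (g x) u = R := by rw [dist_comm]; exact hugx
  have hxw : dist x (g.symm u) = R := by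
    rw [← g.dist_eq x (g.symm u), g.apply_symm_apply, dist_comm]; exact hugx
  have hvw : dist v (g.symm u) = G := by
    rw [← g.dist_eq v (g.symm u), g.apply_symm_apply, dist_comm]; exact hugv
  have hKl : 2 * N + D < dist u (g.symm u) := by
    have tt := dist_triangle u (g.symm u) v
    rw [huv, dist_comm (g.symm u) v, hvw] at tt
    linarith
  have hKu : dist u (g.symm u) ≤ 2 * R + D := by
    have tt := dist_triangle u x (g.symm u)
    rw [hux, hxw] at tt
    linarith
  have hd1 : R ≤ D + dist (g x) (g.symm u) := by
    have tt := dist_triangle x (g x) (g.symm u)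
    rw [hxw, ← hD] at tt
    linarith
  have hd2 : dist (g x) (g.symm u) ≤ D + R := by
    have tt := dist_triangle (g x) x (g.symm u)
    rw [dist_comm (g x) x, ← hD, hxw] at tt
    linarith
  obtain ⟨z, hz1, hz2, hz3, hz4⟩ :=
    realize4 hU x (g x) (g.symm u) u N (N + D) (R - N) (R + N + D)
      (le_of_lt hN) (by linarith) (by linarith) (by linarith)
      (by rw [← hD]; linarith)
      (by rw [hxw]; linarith)
      (by rw [hxu]; linarith)
      (by linarith)
      (by rw [hgxu]; linarith)
      (by rw [dist_comm]; linarith)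
      (by rw [← hD]; linarith) (by rw [← hD])
      (by rw [hxw]; linarith) (by rw [hxw]; linarith)
      (by rw [hxu]; linarith) (by rw [hxu]; linarith)
      (by linarith) (by linarith)
      (by rw [hgxu]; linarith) (by rw [hgxu]; linarith)
      (by have := dist_nonneg (x := g.symm u) (y := u); linarith)
      (by rw [dist_comm]; linarith)
  have hgzu : dist u (g z) = R - N := by
    have h' : dist (g (g.symm u)) (g z) = dist (g.symm u) z := g.dist_eq _ _
    rw [g.apply_symm_apply] at h'
    rw [h', dist_comm]
    exact hz3
  have hlow : 2 * N + D ≤ dist z (g z) := by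
    have tt := dist_triangle z (g z) u
    rw [hz4, dist_comm (g z) u, hgzu] at tt
    linarith
  have hgxgz : dist (g x) (g z) = N := by rw [g.dist_eq, dist_comm]; exact hz1
  have hup : dist z (g z) ≤ N + D + N := by
    have tt := dist_triangle4 z x (g x) (g z)
    rw [hz1, hgxgz, ← hD] at tt
    linarith
  exact ⟨z, by linarith, by rw [hz1, hgxgz, ← hD]; linarith⟩

end TentZieglerU
end

section
/- Let U be a Urysohn space, g an unbounded isometry of U, and X ⊆ U a finite nonempty set. Then there is e = e(X) ≥ 0 (one may take e = 2·diam(X)) such that for every point a ∈ U there is y ∈ U with d(y, x) = d(a, x) for all x ∈ X and d(y, g(y)) ≥ 2·dist(a, X) − e, where dist(a, X) = min_{x ∈ X} d(a, x). -/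
open Metric Set

namespace TentZieglerU

lemma realize {U : Type*} [MetricSpace U] (hU : FinitelyInjective U)
    (g : U ≃ᵢ U) (X : Set U) (hXf : X.Finite) (a z : U) (α β : ℝ)
    (hα : 0 ≤ α) (hβ : 0 ≤ β)
    (h1 : ∀ x ∈ X, |α - dist a x| ≤ dist z x ∧ dist z x ≤ α + dist a x)
    (h2 : ∀ x ∈ X, |β - dist a x| ≤ dist (g z) x ∧ dist (g z) x ≤ β + dist a x)
    (h3 : |α - β| ≤ dist z (g z) ∧ dist z (g z) ≤ α + β) :
    ∃ y : U, (∀ x ∈ X, dist y x = dist a x) ∧ dist y z = α ∧ dist y (g z) = β := by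
  classical
  have hab : g z = z → α = β := by
    intro h
    have h0 : |α - β| ≤ 0 := by
      have h' := h3.1; rw [h, dist_self] at h'; exact h'
    have := abs_nonpos_iff.mp h0
    linarith
  set S : Set U := X ∪ {z, g z} with hS
  have hSfin : S.Finite := hXf.union ((Set.finite_singleton (g z)).insert z)
  set f : U → ℝ := fun u => if u = z then α else if u = g z then β else dist a u with hf
  have fz : f z = α := by simp [hf]
  have fgz : f (g z) = β := by
    by_cases h : g z = z
    · simp [hf, h, hab h]
    · simp [hf, h]
  have fX : ∀ x ∈ X, f x = dist a x := by
    intro x hx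
    by_cases hxz : x = z
    · have hdz : dist z x = 0 := by rw [hxz, dist_self]
      have h0 := (h1 x hx).1
      rw [hdz] at h0
      have hav : α = dist a x := by
        have := abs_nonpos_iff.mp h0; linarith
      simp only [hf]
      rw [if_pos hxz]
      exact hav
    · by_cases hxg : x = g z
      · have hdz : dist (g z) x = 0 := by rw [hxg, dist_self]
        have h0 := (h2 x hx).1
        rw [hdz] at h0
        have hbv : β = dist a x := by
          have := abs_nonpos_iff.mp h0; linarith
        simp only [hf]
        rw [if_neg hxz, if_pos hxg]
        exact hbv
      · simp only [hf]
        rw [if_neg hxz, if_neg hxg]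
  have compat : ∀ u ∈ S, ∀ x ∈ X, |f u - dist a x| ≤ dist u x ∧ dist u x ≤ f u + dist a x := by
    intro u hu x hx
    by_cases h : u = z
    · rw [show f u = α by rw [h, fz], h]
      exact h1 x hx
    · by_cases h' : u = g z
      · rw [show f u = β by rw [h', fgz], h']
        exact h2 x hx
      · have huX : u ∈ X := by
          rcases hu with h0 | h0
          · exact h0
          · exfalso
            rcases Set.mem_insert_iff.mp h0 with h1' | h1'
            · exact h h1'
            · exact h' (Set.mem_singleton_iff.mp h1')
        rw [fX u huX]
        constructor
        · have : |dist u a - dist x a| ≤ dist u x := abs_dist_sub_le u x a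
          rwa [dist_comm u a, dist_comm x a] at this
        · have := dist_triangle u a x
          rwa [dist_comm u a] at this
  have katetov : ∀ u ∈ S, ∀ v ∈ S, |f u - f v| ≤ dist u v ∧ dist u v ≤ f u + f v := by
    have key : ∀ u ∈ S, ∀ v ∈ X, |f u - f v| ≤ dist u v ∧ dist u v ≤ f u + f v := by
      intro u hu v hv
      rw [fX v hv]
      exact compat u hu v hv
    intro u hu v hv
    rcases hv with hvX | hv2
    · exact key u hu v hvX
    · rcases hu with huX | hu2
      · obtain ⟨hA, hB⟩ := key v (Or.inr hv2) u huX
        constructor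
        · rw [abs_sub_comm, dist_comm]; exact hA
        · rw [dist_comm]; linarith
      · have h2z : ∀ w, w ∈ ({z, g z} : Set U) → w = z ∨ w = g z := by
          intro w hw
          rcases Set.mem_insert_iff.mp hw with h | h
          · exact Or.inl h
          · exact Or.inr (Set.mem_singleton_iff.mp h)
        rcases h2z u hu2 with hu' | hu' <;> rcases h2z v hv2 with hv' | hv' <;>
          rw [hu', hv']
        · rw [fz, dist_self]; simp; linarith
        · rw [fz, fgz]; exact h3
        · rw [fz, fgz]
          constructor
          · rw [abs_sub_comm, dist_comm]; exact h3.1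
          · rw [dist_comm]; linarith [h3.2]
        · rw [fgz, dist_self]; simp; linarith
  obtain ⟨y, hy⟩ := hU S hSfin f katetov
  refine ⟨y, fun x hx => ?_, ?_, ?_⟩
  · rw [hy x (Or.inl hx), fX x hx]
  · rw [hy z (Or.inr (Set.mem_insert _ _)), fz]
  · rw [hy (g z) (Or.inr (Set.mem_insert_iff.mpr (Or.inr rfl))), fgz]

lemma option_bound {U : Type*} [MetricSpace U] (hU : FinitelyInjective U)
    (g : U ≃ᵢ U) (X : Set U) (hXf : X.Finite) (hXne : X.Nonempty)
    (a z : U) (L1 U2 : ℝ)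
    (hL1p : ∀ x ∈ X, |dist z x - dist a x| ≤ L1)
    (hL1u : L1 ≤ dist a z)
    (hU2p : ∀ x ∈ X, U2 ≤ dist (g z) x + dist a x)
    (hU2l : dist a (g z) ≤ U2) :
    ∃ y : U, (∀ x ∈ X, dist y x = dist a x) ∧
      min (U2 - max L1 (dist z (g z) - U2)) (dist z (g z)) ≤ dist y (g y) := by
  obtain ⟨x₀, hx₀⟩ := hXne
  set D := dist z (g z) with hD
  have hD0 : 0 ≤ D := dist_nonneg
  have hL10 : 0 ≤ L1 := le_trans (abs_nonneg _) (hL1p x₀ hx₀)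
  have hU20 : 0 ≤ U2 := le_trans dist_nonneg hU2l
  set α := max L1 (D - U2) with hαd
  set β := min U2 (α + D) with hβd
  have hαL : L1 ≤ α := le_max_left _ _
  have hαD : D - U2 ≤ α := le_max_right _ _
  have hα0 : 0 ≤ α := le_trans hL10 hαL
  have hβ0 : 0 ≤ β := le_min hU20 (by linarith)
  have hβU : β ≤ U2 := min_le_left _ _
  have hβD : β ≤ α + D := min_le_right _ _
  have h1 : ∀ x ∈ X, |α - dist a x| ≤ dist z x ∧ dist z x ≤ α + dist a x := by
    intro x hx
    have habs := hL1p x hx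
    have hub := (abs_le.mp habs).2
    have hlb := (abs_le.mp habs).1
    have hza : dist a z ≤ dist a x + dist z x := by
      have := dist_triangle a x z
      rwa [dist_comm x z] at this
    have hDle : D ≤ dist z x + dist a x + U2 := by
      have ht1 : D ≤ dist z x + dist x (g z) := dist_triangle z x (g z)
      have ht2 : dist x (g z) ≤ dist a x + dist a (g z) := by
        have := dist_triangle x a (g z)
        rwa [dist_comm x a] at this
      linarith
    constructor
    · rw [abs_le]
      constructor
      · linarith
      · have hαub : α ≤ dist z x + dist a x := by
          apply max_le <;> linarith
        linarith
    · linarith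
  have h2 : ∀ x ∈ X, |β - dist a x| ≤ dist (g z) x ∧ dist (g z) x ≤ β + dist a x := by
    intro x hx
    have habs : |dist (g z) x - dist a x| ≤ dist (g z) a := abs_dist_sub_le (g z) a x
    rw [dist_comm (g z) a] at habs
    have habs2 : |dist (g z) x - dist a x| ≤ U2 := le_trans habs hU2l
    have habs3 : |dist (g z) x - dist a x| ≤ α + D := by
      have t1 : |dist (g z) x - dist z x| ≤ dist (g z) z := abs_dist_sub_le (g z) z x
      rw [dist_comm (g z) z] at t1
      have t2 : |dist z x - dist a x| ≤ L1 := hL1p x hx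
      have t3 : |dist (g z) x - dist a x| ≤ |dist (g z) x - dist z x| + |dist z x - dist a x| :=
        abs_sub_le _ _ _
      linarith
    have hβabs : |dist (g z) x - dist a x| ≤ β := le_min habs2 habs3
    have hb1 := (abs_le.mp hβabs).1
    have hb2 := (abs_le.mp hβabs).2
    constructor
    · rw [abs_le]
      constructor
      · linarith
      · linarith [hU2p x hx]
    · linarith
  have h3 : |α - β| ≤ D ∧ D ≤ α + β := by
    constructor
    · rw [abs_le]
      constructor
      · linarith
      · have hL1U2D : L1 ≤ U2 + D := by
          have := dist_triangle a (g z) z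
          rw [dist_comm (g z) z] at this
          linarith
        have hαub2 : α ≤ U2 + D := by
          apply max_le <;> linarith
        have hαβD : α - D ≤ β := le_min (by linarith) (by linarith)
        linarith
    · have : D - α ≤ β := le_min (by linarith) (by linarith)
      linarith
  obtain ⟨y, hyX, hyz, hygz⟩ := realize hU g X hXf a z α β hα0 hβ0 h1 h2 h3
  refine ⟨y, hyX, ?_⟩
  have hiso : dist (g y) (g z) = dist y z := g.dist_eq y z
  have htri : dist y (g z) ≤ dist y (g y) + dist (g y) (g z) := dist_triangle _ _ _
  rw [hiso, hyz, hygz] at htri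
  have hkey : min (U2 - α) D ≤ β - α := by
    rcases le_total U2 (α + D) with h | h
    · rw [hβd, min_eq_left h]
      exact min_le_left _ _
    · rw [hβd, min_eq_right h]
      simpa using min_le_right (U2 - α) D

  linarith

lemma dist_symm_self {U : Type*} [MetricSpace U] (g : U ≃ᵢ U) (y : U) :
    dist y (g.symm y) = dist y (g y) := by
  have h := g.dist_eq y (g.symm y)
  rw [g.apply_symm_apply] at h
  rw [← h, dist_comm]

lemma main_case {U : Type*} [MetricSpace U] (hU : FinitelyInjective U)
    (g : U ≃ᵢ U) (X : Set U) (hXf : X.Finite) (hXne : X.Nonempty) (a z : U)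
    (hpq : infDist z X ≤ infDist (g z) X)
    (hDbig : 2 * infDist a X + 2 * Metric.diam X ≤ dist z (g z)) :
    ∃ y : U, (∀ x ∈ X, dist y x = dist a x) ∧
      2 * infDist a X - 2 * Metric.diam X ≤ dist y (g y) := by
  classical
  set r := infDist a X with hrdef
  set dm := Metric.diam X with hdmdef
  set p := infDist z X with hpdef
  set q := infDist (g z) X with hqdef
  set D := dist z (g z) with hDdef
  have hbdd : Bornology.IsBounded X := hXf.isBounded
  have hdm0 : 0 ≤ dm := Metric.diam_nonneg
  have hr0 : 0 ≤ r := infDist_nonneg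
  have hp0 : 0 ≤ p := infDist_nonneg
  obtain ⟨x0, hx0X, hx0⟩ := hXf.isCompact.exists_infDist_eq_dist hXne a
  obtain ⟨x1, hx1X, hx1⟩ := hXf.isCompact.exists_infDist_eq_dist hXne z
  obtain ⟨x2, hx2X, hx2⟩ := hXf.isCompact.exists_infDist_eq_dist hXne (g z)
  have hra : ∀ x ∈ X, r ≤ dist a x := fun x hx => infDist_le_dist_of_mem hx
  have hrb : ∀ x ∈ X, dist a x ≤ r + dm := by
    intro x hx
    have ht := dist_triangle a x0 x
    have hdia := Metric.dist_le_diam_of_mem hbdd hx0X hx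
    rw [← hx0] at ht
    linarith
  have hpa : ∀ x ∈ X, p ≤ dist z x := fun x hx => infDist_le_dist_of_mem hx
  have hpb : ∀ x ∈ X, dist z x ≤ p + dm := by
    intro x hx
    have ht := dist_triangle z x1 x
    have hdia := Metric.dist_le_diam_of_mem hbdd hx1X hx
    rw [← hx1] at ht
    linarith
  have hqa : ∀ x ∈ X, q ≤ dist (g z) x := fun x hx => infDist_le_dist_of_mem hx
  have hDub : D ≤ p + q + dm := by
    have ht := dist_triangle4 z x1 x2 (g z)
    have hdia := Metric.dist_le_diam_of_mem hbdd hx1X hx2X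
    have h2 : dist x2 (g z) = q := by rw [dist_comm, ← hx2]
    rw [← hx1, h2] at ht
    linarith
  -- L1 and U2
  set s := hXf.toFinset with hsdef
  have hsne : s.Nonempty := by
    rw [hsdef, Set.Finite.toFinset_nonempty]; exact hXne
  have hmem : ∀ x ∈ X, x ∈ s := fun x hx => hXf.mem_toFinset.mpr hx
  have hmem' : ∀ x ∈ s, x ∈ X := fun x hx => hXf.mem_toFinset.mp hx
  set L1 := s.sup' hsne (fun x => |dist z x - dist a x|) with hL1def
  set U2 := s.inf' hsne (fun x => dist (g z) x + dist a x) with hU2def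
  have hL1p : ∀ x ∈ X, |dist z x - dist a x| ≤ L1 := by
    intro x hx
    rw [hL1def]
    exact Finset.le_sup' (fun x => |dist z x - dist a x|) (hmem x hx)
  have hL1u : L1 ≤ dist a z := by
    rw [hL1def]
    apply Finset.sup'_le
    intro x hx
    have h := abs_dist_sub_le z a x
    rwa [dist_comm z a] at h
  have hU2p : ∀ x ∈ X, U2 ≤ dist (g z) x + dist a x := by
    intro x hx
    rw [hU2def]
    exact Finset.inf'_le (fun x => dist (g z) x + dist a x) (hmem x hx)
  have hU2l : dist a (g z) ≤ U2 := by
    rw [hU2def]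
    apply Finset.le_inf'
    intro x hx
    have h := dist_triangle a x (g z)
    rw [dist_comm x (g z)] at h
    linarith
  have hL1ub : L1 ≤ |p - r| + dm := by
    rw [hL1def]
    apply Finset.sup'_le
    intro x hxs
    have hx := hmem' x hxs
    have h1 := hpa x hx
    have h2 := hpb x hx
    have h3 := hra x hx
    have h4 := hrb x hx
    have ha1 : p - r ≤ |p - r| := le_abs_self _
    have ha2 : r - p ≤ |p - r| := by
      rw [abs_sub_comm]; exact le_abs_self _
    rw [abs_le]
    constructor <;> linarith
  have hU2lb : q + r ≤ U2 := by
    rw [hU2def]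
    apply Finset.le_inf'
    intro x hxs
    have hx := hmem' x hxs
    linarith [hqa x hx, hra x hx]
  obtain ⟨y, hyX, hybound⟩ := option_bound hU g X hXf hXne a z L1 U2 hL1p hL1u hU2p hU2l
  refine ⟨y, hyX, le_trans ?_ hybound⟩
  apply le_min
  · have ha1 : p - r ≤ |p - r| := le_abs_self _
    have key : max L1 (D - U2) ≤ U2 - 2 * r + 2 * dm := by
      rcases le_total p r with hc | hc
      · have hpr : |p - r| = r - p := by
          rw [abs_of_nonpos (by linarith)]; ring
        apply max_le
        · rw [hpr] at hL1ub
          linarith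
        · linarith
      · have hpr : |p - r| = p - r := abs_of_nonneg (by linarith)
        apply max_le
        · rw [hpr] at hL1ub
          linarith
        · linarith
    linarith
  · linarith

/-- Lemma 4.5: for an unbounded isometry `g` and a finite nonempty set `X` there is
`e = e(X) ≥ 0` such that every type over `X` has a realisation `y` with
`d(y, g y) ≥ 2 d(p, X) - e`. -/
theorem type_lemma {U : Type*} [MetricSpace U] [Nonempty U] [CompleteSpace U]
    [TopologicalSpace.SeparableSpace U] (hU : FinitelyInjective U)
    (g : U ≃ᵢ U) (hg : IsUnbounded g)
    (X : Set U) (hXf : X.Finite) (hXne : X.Nonempty) :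
    ∃ e : ℝ, 0 ≤ e ∧ ∀ a : U, ∃ y : U,
      (∀ x ∈ X, dist y x = dist a x) ∧
      2 * Metric.infDist a X - e ≤ dist y (g y) := by
  refine ⟨2 * Metric.diam X, by linarith [Metric.diam_nonneg (s := X)], fun a => ?_⟩
  obtain ⟨z, hz⟩ := hg (2 * infDist a X + 2 * Metric.diam X)
  rcases le_total (infDist z X) (infDist (g z) X) with hc | hc
  · exact main_case hU g X hXf hXne a z hc hz.le
  · have hz' : 2 * infDist a X + 2 * Metric.diam X ≤ dist (g z) (g.symm (g z)) := by
      rw [g.symm_apply_apply, dist_comm]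
      exact hz.le
    have hc' : infDist (g z) X ≤ infDist (g.symm (g z)) X := by
      rw [g.symm_apply_apply]; exact hc
    obtain ⟨y, h1, h2⟩ := main_case hU g.symm X hXf hXne a (g z) hc' hz'
    refine ⟨y, h1, ?_⟩
    rw [← dist_symm_self g y]
    exact h2


end TentZieglerU
end
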